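/- arXiv:1708.09012 — 5 statements merged into one kernel-verified Lean document; each statement's English description precedes it below -/
import Mathlib

section
/- If a continuous action of a countable group Γ on a compact metrizable space X has the weak specification property, then every topological factor of the action also has the weak specification property. -/
open Filter Topology MeasureTheory
open scoped symmDiff

namespace GOE

/-- The action of `Γ` on `X` is continuous (each group element acts continuously). -/
def ContAction (Γ X : Type*) [Group Γ] [TopologicalSpace X] [MulAction Γ X] : Prop :=
  ∀ s : Γ, Continuous fun x : X => s • x

/-- The weak specification property with respect to the metric on `X`. -/
def WeakSpec (Γ X : Type*) [Group Γ] [MetricSpace X] [MulAction Γ X] : Prop :=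
  ∀ ε : ℝ, 0 < ε → ∃ F : Finset Γ, F.Nonempty ∧ (∀ s ∈ F, s⁻¹ ∈ F) ∧
    ∀ (J : Type) (_ : Fintype J) (Fj : J → Finset Γ),
      (∀ i j : J, i ≠ j → ∀ f ∈ F, ∀ s ∈ Fj i, f * s ∉ Fj j) →
      ∀ xj : J → X, ∃ x : X, ∀ j : J, ∀ s ∈ Fj j, dist (s • x) (s • xj j) ≤ ε

/-- Expansiveness of the action with respect to the metric on `X`. -/
def Expansive (Γ X : Type*) [Group Γ] [MetricSpace X] [MulAction Γ X] : Prop :=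
  ∃ κ : ℝ, 0 < κ ∧ ∀ x y : X, x ≠ y → ∃ s : Γ, κ < dist (s • x) (s • y)

/-- `(x, y)` is a homoclinic pair: `dist (s • x) (s • y) → 0` as `s → ∞` in `Γ`. -/
def Homoclinic (Γ : Type*) {X : Type*} [Group Γ] [MetricSpace X] [MulAction Γ X]
    (x y : X) : Prop :=
  ∀ ε : ℝ, 0 < ε → ∃ E : Finset Γ, ∀ s : Γ, s ∉ E → dist (s • x) (s • y) < ε

/-- `T` is pre-injective: injective on each homoclinic equivalence class. -/
def PreInjective (Γ : Type*) {X Y : Type*} [Group Γ] [MetricSpace X] [MulAction Γ X]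
    (T : X → Y) : Prop :=
  ∀ x y : X, Homoclinic Γ x y → T x = T y → x = y

/-- `F` is a left Følner sequence for `Γ`. -/
def IsFolner (Γ : Type*) [Group Γ] (F : ℕ → Finset Γ) : Prop :=
  letI := Classical.decEq Γ
  (∀ n, (F n).Nonempty) ∧
  ∀ K : Finset Γ, K.Nonempty →
    Tendsto (fun n =>
        ((((K.biUnion fun k => (F n).image fun t => k * t) ∆ (F n)).card : ℝ) / (F n).card))
      atTop (𝓝 0)

/-- The minimal number of members of the cover `⋁_{s ∈ E} s⁻¹ U` needed to cover `Z`. -/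
noncomputable def covNumOn (Γ X : Type*) [Group Γ] [TopologicalSpace X] [MulAction Γ X]
    (Z : Set X) (U : Finset (Set X)) (E : Finset Γ) : ℕ :=
  sInf {n : ℕ | ∃ c : Finset (Γ → Set X), c.card = n ∧ (∀ f ∈ c, ∀ s : Γ, f s ∈ U) ∧
    Z ⊆ ⋃ f ∈ c, ⋂ s ∈ E, (fun x : X => s • x) ⁻¹' f s}

/-- Topological entropy of the restriction of the action to the invariant set `Z`,
computed along the Følner sequence `F` via open covers. -/
noncomputable def topEntOn (Γ X : Type*) [Group Γ] [TopologicalSpace X] [MulAction Γ X]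
    (Z : Set X) (F : ℕ → Finset Γ) : EReal :=
  ⨆ (U : Finset (Set X)) (_ : (∀ V ∈ U, IsOpen V) ∧ Z ⊆ ⋃₀ (↑U : Set (Set X))),
    Filter.limsup
      (fun n => ((Real.log (covNumOn Γ X Z U (F n)) / (F n).card : ℝ) : EReal)) Filter.atTop

/-- Maximal cardinality of a `(ρ_E, ε)`-separated subset of `Z`. -/
noncomputable def sepNum (Γ X : Type*) [Group Γ] [MetricSpace X] [MulAction Γ X]
    (Z : Set X) (E : Finset Γ) (ε : ℝ) : ℕ :=
  sSup {n : ℕ | ∃ W : Finset X, (↑W : Set X) ⊆ Z ∧ W.card = n ∧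
    ∀ x ∈ W, ∀ y ∈ W, x ≠ y → ∃ s ∈ E, ε ≤ dist (s • x) (s • y)}

/-- Minimal cardinality of a `(ρ_E, ε)`-spanning subset of `Z`. -/
noncomputable def spnNum (Γ X : Type*) [Group Γ] [MetricSpace X] [MulAction Γ X]
    (Z : Set X) (E : Finset Γ) (ε : ℝ) : ℕ :=
  sInf {n : ℕ | ∃ W : Finset X, (↑W : Set X) ⊆ Z ∧ W.card = n ∧
    ∀ x ∈ Z, ∃ w ∈ W, ∀ s ∈ E, dist (s • x) (s • w) < ε}

/-- Shannon entropy of a finite family of Borel sets. -/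
noncomputable def shannonH {X : Type*} [MeasurableSpace X] (μ : Measure X)
    (P : Finset (Set X)) : ℝ :=
  ∑ A ∈ P, -((μ A).toReal * Real.log (μ A).toReal)

/-- The join `⋁_{s ∈ E} s⁻¹ P` of the partition `P`. -/
noncomputable def joinPart (Γ X : Type*) [Group Γ] [MulAction Γ X]
    (P : Finset (Set X)) (E : Finset Γ) : Finset (Set X) :=
  letI := Classical.decEq Γ
  letI := Classical.decEq (Set X)
  (E.pi fun _ => P).image fun f => ⋂ s, ⋂ (h : s ∈ E), (fun x : X => s • x) ⁻¹' f s h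

/-- Dynamical entropy of the partition `P` along the Følner sequence `F`. -/
noncomputable def dynEnt (Γ X : Type*) [Group Γ] [MulAction Γ X] [MeasurableSpace X]
    (μ : Measure X) (P : Finset (Set X)) (F : ℕ → Finset Γ) : ℝ :=
  Filter.limsup (fun n => shannonH μ (joinPart Γ X P (F n)) / (F n).card) Filter.atTop

/-- `P` is a finite Borel partition of `X`. -/
def IsBorelPartition {X : Type*} [MeasurableSpace X] (P : Finset (Set X)) : Prop :=
  (∀ A ∈ P, MeasurableSet A) ∧ (∀ A ∈ P, ∀ B ∈ P, A ≠ B → Disjoint A B) ∧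
    ⋃₀ (↑P : Set (Set X)) = Set.univ

/-- Completely positive entropy of `Γ ↷ (X, μ)` along the Følner sequence `F`. -/
def HasCPE (Γ X : Type*) [Group Γ] [MulAction Γ X] [MeasurableSpace X]
    (μ : Measure X) (F : ℕ → Finset Γ) : Prop :=
  ∀ P : Finset (Set X), IsBorelPartition P → 0 < shannonH μ P → 0 < dynEnt Γ X μ P F

/-- `K'` is an independence set for the tuple `D` of subsets of `X`. -/
def IsIndepSet (Γ X : Type*) [Group Γ] [MulAction Γ X] {k : ℕ}
    (D : Fin k → Set X) (K' : Finset Γ) : Prop :=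
  ∀ ω : Γ → Fin k, ∃ x : X, ∀ s ∈ K', s • x ∈ D (ω s)

/-- The independence density of the tuple `D`. -/
noncomputable def indepDensity (Γ X : Type*) [Group Γ] [MulAction Γ X] {k : ℕ}
    (D : Fin k → Set X) : ℝ :=
  sInf {r : ℝ | ∃ K : Finset Γ, K.Nonempty ∧
    r = ((sSup {n : ℕ | ∃ K' ⊆ K, K'.card = n ∧ IsIndepSet Γ X D K'} : ℕ) : ℝ) / K.card}

/-- The shift action `(s • x)_t = x_{s⁻¹ t}` on `Γ → A`. -/
def shiftAct {Γ A : Type*} [Group Γ] (s : Γ) (x : Γ → A) : Γ → A := fun t => x (s⁻¹ * t)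

end GOE

namespace GOE

theorem WeakSpec.of_surjective_uniformContinuous {Γ X Y : Type*} [Group Γ]
    [MetricSpace X] [MulAction Γ X] [MetricSpace Y] [MulAction Γ Y]
    {π : X → Y} (hπu : UniformContinuous π) (hπsurj : Function.Surjective π)
    (hπequiv : ∀ (s : Γ) (x : X), π (s • x) = s • π x) (hws : WeakSpec Γ X) :
    WeakSpec Γ Y := by
  intro ε hε
  obtain ⟨δ, hδ, hπδ⟩ := Metric.uniformContinuous_iff.mp hπu ε hε
  obtain ⟨F, hFne, hFsymm, hF⟩ := hws (δ / 2) (half_pos hδ)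
  refine ⟨F, hFne, hFsymm, fun J _ Fj hsep yj => ?_⟩
  choose xj hxj using fun j => hπsurj (yj j)
  obtain ⟨x, hx⟩ := hF J ‹_› Fj hsep xj
  refine ⟨π x, fun j s hs => ?_⟩
  have hclose : dist (s • π x) (s • π (xj j)) < ε := by
    rw [← hπequiv, ← hπequiv]
    exact hπδ ((hx j s hs).trans_lt (half_lt_self hδ))
  rw [hxj] at hclose
  exact hclose.le

end GOE

open GOE

theorem weakSpec_factor_general {Γ X Y : Type*} [Group Γ]
    [MetricSpace X] [CompactSpace X] [MulAction Γ X]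
    [MetricSpace Y] [MulAction Γ Y]
    (π : X → Y) (hπc : Continuous π) (hπsurj : Function.Surjective π)
    (hπequiv : ∀ (s : Γ) (x : X), π (s • x) = s • π x)
    (hws : WeakSpec Γ X) : WeakSpec Γ Y :=
  hws.of_surjective_uniformContinuous (CompactSpace.uniformContinuous_of_continuous hπc)
    hπsurj hπequiv

/-- weak specification passes to factors. -/
theorem weakSpec_factor {Γ X Y : Type*} [Group Γ] [Countable Γ]
    [MetricSpace X] [CompactSpace X] [MulAction Γ X]
    [MetricSpace Y] [CompactSpace Y] [MulAction Γ Y]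
    (hactX : ContAction Γ X) (hactY : ContAction Γ Y)
    (π : X → Y) (hπc : Continuous π) (hπsurj : Function.Surjective π)
    (hπequiv : ∀ (s : Γ) (x : X), π (s • x) = s • π x)
    (hws : WeakSpec Γ X) : WeakSpec Γ Y :=
  weakSpec_factor_general π hπc hπsurj hπequiv hws
end

section
/- Let a countable group Γ act continuously on a compact metrizable space X with the weak specification property. Then every tuple (x₁, …, x_k) ∈ X^k is an orbit IE-tuple; that is, for every product neighborhood U₁ × ⋯ × U_k of (x₁, …, x_k), the tuple (U₁, …, U_k) has positive independence density. -/
open Filter Topology MeasureTheory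
open scoped symmDiff

open GOE

/-! Choose `ε` with `closedBall (x i) ε ⊆ U i` and let `F` be the finite symmetric set given
by weak specification at scale `ε`. Weak specification applied to singletons lets the points of
an `F`-separated set `K'` be sent independently `ε`-close to any of the `x i`, so `K'` is an
independence set. Choosing points of a finite `K` greedily, each one discarding its
`(F ∪ {1})`-translates, gives an `F`-separated `K' ⊆ K` with `K ⊆ (F ∪ {1}) K'`, so
`φ(K) ≥ |K| / (|F| + 1)`. -/

open scoped Pointwise
open Finset

theorem Metric.exists_pos_forall_closedBall_subset {ι α : Type*} [Finite ι]
    [PseudoMetricSpace α] {x : ι → α} {U : ι → Set α} (hU : ∀ i, U i ∈ 𝓝 (x i)) :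
    ∃ ε > 0, ∀ i, Metric.closedBall (x i) ε ⊆ U i := by
  have hsmall : ∀ᶠ r in 𝓝[>] (0 : ℝ), ∀ i, Metric.closedBall (x i) r ⊆ U i :=
    nhdsWithin_le_nhds (eventually_all.2 fun i => eventually_closedBall_subset (hU i))
  exact (eventually_mem_nhdsWithin.and hsmall).exists

theorem Finset.exists_subset_pairwise_mul_ne_and_subset_insert_one_mul {Γ : Type*} [Group Γ]
    [DecidableEq Γ] {F : Finset Γ} (hF : ∀ s ∈ F, s⁻¹ ∈ F) (K : Finset Γ) :
    ∃ K' ⊆ K, (K' : Set Γ).Pairwise (fun s t => ∀ f ∈ F, f * s ≠ t) ∧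
      K ⊆ insert 1 F * K' := by
  induction K using Finset.strongInduction with
  | _ K ih =>
    obtain rfl | ⟨s, hs⟩ := K.eq_empty_or_nonempty
    · exact ⟨∅, subset_rfl, by simp, by simp⟩
    set B := (insert 1 F).image (· * s)
    have hsB : s ∈ B := mem_image.2 ⟨1, mem_insert_self _ _, one_mul s⟩
    obtain ⟨K₀, hK₀, hsep, hcov⟩ :=
      ih (K \ B) (ssubset_iff_of_subset sdiff_subset |>.2 ⟨s, hs, fun h => (mem_sdiff.1 h).2 hsB⟩)
    refine ⟨insert s K₀, insert_subset hs (hK₀.trans sdiff_subset), ?_, ?_⟩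
    · rw [coe_insert, Set.pairwise_insert]
      refine ⟨hsep, fun t ht _ => ⟨?_, ?_⟩⟩ <;> intro f hf hft <;>
        refine (mem_sdiff.1 (hK₀ ht)).2 (mem_image.2 ?_)
      · exact ⟨f, mem_insert_of_mem hf, hft⟩
      · exact ⟨f⁻¹, mem_insert_of_mem (hF f hf), by rw [← hft, inv_mul_cancel_left]⟩
    · intro t ht
      by_cases htB : t ∈ B
      · obtain ⟨g, hg, rfl⟩ := mem_image.1 htB
        exact mul_mem_mul hg (mem_insert_self s K₀)
      · exact mul_subset_mul_left (subset_insert s K₀) (hcov (mem_sdiff.2 ⟨ht, htB⟩))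

theorem GOE.WeakSpec.exists_dist_le_of_pairwise {Γ X : Type*} [Group Γ] [MetricSpace X]
    [MulAction Γ X] (hws : WeakSpec Γ X) {ε : ℝ} (hε : 0 < ε) :
    ∃ F : Finset Γ, (∀ s ∈ F, s⁻¹ ∈ F) ∧
      ∀ K : Finset Γ, (K : Set Γ).Pairwise (fun s t => ∀ f ∈ F, f * s ≠ t) →
        ∀ z : Γ → X, ∃ y : X, ∀ s ∈ K, dist (s • y) (s • z s) ≤ ε := by
  obtain ⟨F, -, hFinv, hspec⟩ := hws ε hε
  refine ⟨F, hFinv, fun K hK z => ?_⟩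
  -- `J` must live in `Type`, so `K` is enumerated by `Fin #K`.
  let e := K.equivFin.symm
  obtain ⟨y, hy⟩ := hspec (Fin K.card) inferInstance (fun j => {(e j : Γ)})
    (fun i j hij f hf u hu hfu => by
      rw [mem_singleton] at hu hfu
      exact hK (e i).2 (e j).2 (fun h => hij (e.injective (Subtype.ext h))) f hf (hu ▸ hfu))
    (fun j => z (e j))
  refine ⟨y, fun s hs => ?_⟩
  simpa [e] using hy (K.equivFin ⟨s, hs⟩) s (by simp [e])

theorem GOE.le_indepDensity {Γ X : Type*} [Group Γ] [MulAction Γ X] {k : ℕ}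
    {D : Fin k → Set X} {c : ℝ}
    (h : ∀ K : Finset Γ, K.Nonempty → ∃ K' ⊆ K, IsIndepSet Γ X D K' ∧ c * K.card ≤ K'.card) :
    c ≤ indepDensity Γ X D := by
  refine le_csInf ⟨_, {1}, singleton_nonempty 1, rfl⟩ ?_
  rintro r ⟨K, hK, rfl⟩
  obtain ⟨K', hK'K, hK', hcard⟩ := h K hK
  have hbdd : BddAbove {n : ℕ | ∃ K' ⊆ K, K'.card = n ∧ IsIndepSet Γ X D K'} :=
    ⟨K.card, by rintro n ⟨K'', hK'', rfl, -⟩; exact card_le_card hK''⟩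
  rw [le_div_iff₀ (by exact_mod_cast hK.card_pos)]
  exact hcard.trans (by exact_mod_cast le_csSup hbdd ⟨K', hK'K, rfl, hK'⟩)

theorem weakSpec_every_tuple_IE_general {Γ X : Type*} [Group Γ]
    [MetricSpace X] [MulAction Γ X]
    (hws : WeakSpec Γ X)
    (k : ℕ) (x : Fin k → X) (U : Fin k → Set X) (hU : ∀ i, U i ∈ 𝓝 (x i)) :
    0 < indepDensity Γ X U := by
  classical
  obtain ⟨ε, hε, hball⟩ := Metric.exists_pos_forall_closedBall_subset hU
  obtain ⟨F, hFinv, hspec⟩ := hws.exists_dist_le_of_pairwise hε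
  refine (by positivity : (0 : ℝ) < 1 / (F.card + 1)).trans_le (le_indepDensity fun K _ => ?_)
  obtain ⟨K', hK'K, hsep, hcov⟩ :=
    Finset.exists_subset_pairwise_mul_ne_and_subset_insert_one_mul hFinv K
  have hindep : IsIndepSet Γ X U K' := fun ω => by
    obtain ⟨y, hy⟩ := hspec K' hsep fun s => s⁻¹ • x (ω s)
    exact ⟨y, fun s hs => hball (ω s) (by simpa using hy s hs)⟩
  have hcard : K.card ≤ (F.card + 1) * K'.card :=
    (card_le_card hcov).trans <| card_mul_le.trans <| Nat.mul_le_mul_right _ (card_insert_le 1 F)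
  refine ⟨K', hK'K, hindep, ?_⟩
  rw [one_div_mul_eq_div, div_le_iff₀ (by positivity)]
  exact_mod_cast hcard.trans_eq (mul_comm _ _)

/-- for an action with weak specification, every tuple is an orbit
IE-tuple. -/
theorem weakSpec_every_tuple_IE {Γ X : Type*} [Group Γ] [Countable Γ]
    [MetricSpace X] [CompactSpace X] [MulAction Γ X]
    (hact : ContAction Γ X) (hws : WeakSpec Γ X)
    (k : ℕ) (x : Fin k → X) (U : Fin k → Set X) (hU : ∀ i, U i ∈ 𝓝 (x i)) :
    0 < indepDensity Γ X U :=
  weakSpec_every_tuple_IE_general hws k x U hU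
end

section
/- Let a countable group Γ act continuously on a compact metrizable space X with the weak specification property, witnessed for a given ε > 0 by a symmetric finite set F containing the identity. Let x₁, …, x_k ∈ X and let D_i = {x ∈ X : ρ(x, x_i) ≤ ε}. Then the tuple (D₁, …, D_k) has independence density at least 1/|F|. -/
open Filter Topology MeasureTheory
open scoped symmDiff

open GOE

/-
Any finite `K ⊆ Γ` contains a subset `K'` with `|K| ≤ |F| |K'|` whose elements are pairwise
`F`-separated (`f * t ≠ s` for `f ∈ F` and distinct `s, t ∈ K'`): pick `a ∈ K`, discard the at
most `|F|` elements of `F a` (by symmetry of `F` this also covers `s` with `a ∈ F s`), recurse.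
Weak specification applied to the singletons `{s}`, `s ∈ K'`, with targets `s⁻¹ x_{ω(s)}`,
produces a point whose orbit visits the prescribed balls, so `K'` is an independence set.
-/

theorem Finset.exists_subset_card_le_mul_card_separated {Γ : Type*} [Group Γ] [DecidableEq Γ]
    (F : Finset Γ) (hFe : (1 : Γ) ∈ F) (hFsymm : ∀ f ∈ F, f⁻¹ ∈ F) (K : Finset Γ) :
    ∃ K' ⊆ K, K.card ≤ F.card * K'.card ∧
      ∀ s ∈ K', ∀ t ∈ K', s ≠ t → ∀ f ∈ F, f * t ≠ s := by
  induction K using Finset.strongInduction with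
  | _ K ih =>
    rcases K.eq_empty_or_nonempty with rfl | ⟨a, ha⟩
    · exact ⟨∅, subset_rfl, by simp, by simp⟩
    set Fa := F.image (· * a)
    have ha_Fa : a ∈ Fa := mem_image.mpr ⟨1, hFe, one_mul a⟩
    obtain ⟨K', hK'_sub, hcard, hsep⟩ :=
      ih (K.filter (· ∉ Fa)) (filter_ssubset.mpr ⟨a, ha, not_not.mpr ha_Fa⟩)
    have hK'_Fa : ∀ t ∈ K', t ∉ Fa := fun t ht => (mem_filter.mp (hK'_sub ht)).2
    have ha_K' : a ∉ K' := fun h => hK'_Fa a h ha_Fa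
    refine ⟨insert a K', insert_subset ha (hK'_sub.trans (filter_subset _ _)), ?_, ?_⟩
    · have hK_le : K.card ≤ (K.filter (· ∉ Fa)).card + F.card := by
        calc K.card ≤ (K.filter (· ∉ Fa) ∪ Fa).card := card_le_card fun t ht => by
              by_cases h : t ∈ Fa
              · exact mem_union_right _ h
              · exact mem_union_left _ (mem_filter.mpr ⟨ht, h⟩)
          _ ≤ (K.filter (· ∉ Fa)).card + F.card :=
              (card_union_le _ _).trans (Nat.add_le_add_left card_image_le _)
      rw [card_insert_of_notMem ha_K', Nat.mul_add, Nat.mul_one]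
      omega
    · intro s hs t ht hst f hf hft
      rcases mem_insert.mp hs with rfl | hs_K' <;> rcases mem_insert.mp ht with rfl | ht_K'
      · exact hst rfl
      · exact hK'_Fa t ht_K'
          (mem_image.mpr ⟨f⁻¹, hFsymm f hf, by rw [← hft, inv_mul_cancel_left]⟩)
      · exact hK'_Fa s hs_K' (mem_image.mpr ⟨f, hf, hft⟩)
      · exact hsep s hs_K' t ht_K' hst f hf hft

theorem isIndepSet_closedBall_of_separated {Γ X : Type*} [Group Γ] [MetricSpace X]
    [MulAction Γ X] {ε : ℝ} {F : Finset Γ}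
    (hwit : ∀ (J : Type) (_ : Fintype J) (Fj : J → Finset Γ),
      (∀ i j : J, i ≠ j → ∀ f ∈ F, ∀ s ∈ Fj i, f * s ∉ Fj j) →
      ∀ yj : J → X, ∃ y : X, ∀ j : J, ∀ s ∈ Fj j, dist (s • y) (s • yj j) ≤ ε)
    {k : ℕ} (x : Fin k → X) {K' : Finset Γ}
    (hsep : ∀ s ∈ K', ∀ t ∈ K', s ≠ t → ∀ f ∈ F, f * t ≠ s) :
    IsIndepSet Γ X (fun i => Metric.closedBall (x i) ε) K' := by
  classical
  intro ω
  -- `hwit` quantifies over `J : Type`, so `K'` is indexed through `Fin K'.card`.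
  let e : Fin K'.card ≃ K' := K'.equivFin.symm
  have hdisj : ∀ i j, i ≠ j → ∀ f ∈ F, ∀ s ∈ ({(e i : Γ)} : Finset Γ),
      f * s ∉ ({(e j : Γ)} : Finset Γ) := by
    intro i j hij f hf s hs
    rw [Finset.mem_singleton] at hs ⊢
    subst hs
    exact hsep _ (e j).2 _ (e i).2 (fun h => hij (e.injective (Subtype.ext h.symm))) f hf
  obtain ⟨y, hy⟩ := hwit _ inferInstance (fun j => {(e j : Γ)}) hdisj
    (fun j => (e j : Γ)⁻¹ • x (ω (e j)))
  refine ⟨y, fun s hs => ?_⟩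
  simpa [e] using hy (e.symm ⟨s, hs⟩) s (by simp [e])

theorem one_div_le_indepDensity {Γ X : Type*} [Group Γ] [MulAction Γ X] {k : ℕ}
    {D : Fin k → Set X} {m : ℕ} (hm : 0 < m)
    (h : ∀ K : Finset Γ, K.Nonempty → ∃ K' ⊆ K, K.card ≤ m * K'.card ∧ IsIndepSet Γ X D K') :
    1 / (m : ℝ) ≤ indepDensity Γ X D := by
  refine le_csInf ⟨_, {1}, Finset.singleton_nonempty 1, rfl⟩ ?_
  rintro r ⟨K, hK, rfl⟩
  obtain ⟨K', hK'_sub, hcard, hindep⟩ := h K hK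
  have hbdd : BddAbove {n : ℕ | ∃ K' ⊆ K, K'.card = n ∧ IsIndepSet Γ X D K'} :=
    ⟨K.card, fun n ⟨L, hL, hLn, _⟩ => hLn ▸ Finset.card_le_card hL⟩
  have hK'_le := le_csSup hbdd ⟨K', hK'_sub, rfl, hindep⟩
  rw [div_le_div_iff₀ (by exact_mod_cast hm) (by exact_mod_cast hK.card_pos), one_mul]
  exact_mod_cast hcard.trans (by rw [mul_comm]; exact Nat.mul_le_mul_right m hK'_le)

theorem indepDensity_ge_of_weakSpec_witness_general {Γ X : Type*} [Group Γ]
    [MetricSpace X] [MulAction Γ X]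
    (ε : ℝ) (F : Finset Γ) (hFe : (1 : Γ) ∈ F) (hFsymm : ∀ s ∈ F, s⁻¹ ∈ F)
    (hwit : ∀ (J : Type) (_ : Fintype J) (Fj : J → Finset Γ),
      (∀ i j : J, i ≠ j → ∀ f ∈ F, ∀ s ∈ Fj i, f * s ∉ Fj j) →
      ∀ yj : J → X, ∃ y : X, ∀ j : J, ∀ s ∈ Fj j, dist (s • y) (s • yj j) ≤ ε)
    (k : ℕ) (x : Fin k → X) :
    1 / (F.card : ℝ) ≤ indepDensity Γ X (fun i => {z : X | dist z (x i) ≤ ε}) := by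
  classical
  refine one_div_le_indepDensity (Finset.card_pos.mpr ⟨1, hFe⟩) fun K _ => ?_
  obtain ⟨K', hK'_sub, hcard, hsep⟩ :=
    Finset.exists_subset_card_le_mul_card_separated F hFe hFsymm K
  exact ⟨K', hK'_sub, hcard, isIndepSet_closedBall_of_separated hwit x hsep⟩

/-- the tuple of closed `ε`-balls around `x₁, …, x_k` has
independence density at least `1/|F|`, where `F` witnesses weak specification
for `ε`. -/
theorem indepDensity_ge_of_weakSpec_witness {Γ X : Type*} [Group Γ] [Countable Γ]
    [MetricSpace X] [CompactSpace X] [MulAction Γ X]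
    (hact : ContAction Γ X)
    (ε : ℝ) (hε : 0 < ε) (F : Finset Γ) (hFe : (1 : Γ) ∈ F) (hFsymm : ∀ s ∈ F, s⁻¹ ∈ F)
    (hwit : ∀ (J : Type) (_ : Fintype J) (Fj : J → Finset Γ),
      (∀ i j : J, i ≠ j → ∀ f ∈ F, ∀ s ∈ Fj i, f * s ∉ Fj j) →
      ∀ yj : J → X, ∃ y : X, ∀ j : J, ∀ s ∈ Fj j, dist (s • y) (s • yj j) ≤ ε)
    (k : ℕ) (x : Fin k → X) :
    1 / (F.card : ℝ) ≤ indepDensity Γ X (fun i => {z : X | dist z (x i) ≤ ε}) :=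
  indepDensity_ge_of_weakSpec_witness_general ε F hFe hFsymm hwit k x
end

section
/- Let Γ be a countable amenable group acting expansively and with the weak specification property on a compact metrizable space Y. Then for any nonempty closed Γ-invariant subset Z of Y with Z ≠ Y, the topological entropy of the restricted action Γ ↷ Z is strictly less than the topological entropy of Γ ↷ Y. -/
open Filter Topology MeasureTheory
open scoped symmDiff

open GOE
section AuxGOE

open Metric Filter GOE

variable {Γ Y : Type*} [Group Γ] [MetricSpace Y] [MulAction Γ Y]

/-- The set of cardinalities of `(E, a)`-separated subsets of `Z`. -/
def sepSet (Γ Y : Type*) [Group Γ] [MetricSpace Y] [MulAction Γ Y]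
    (Z : Set Y) (E : Finset Γ) (a : ℝ) : Set ℕ :=
  {n : ℕ | ∃ W : Finset Y, (↑W : Set Y) ⊆ Z ∧ W.card = n ∧
    ∀ x ∈ W, ∀ y ∈ W, x ≠ y → ∃ s ∈ E, a ≤ dist (s • x) (s • y)}

lemma sepNum_def (Z : Set Y) (E : Finset Γ) (a : ℝ) :
    sepNum Γ Y Z E a = sSup (sepSet Γ Y Z E a) := rfl

lemma zero_mem_sepSet (Z : Set Y) (E : Finset Γ) (a : ℝ) : 0 ∈ sepSet Γ Y Z E a :=
  ⟨∅, by simp, by simp, by simp⟩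

lemma exists_net [CompactSpace Y] {r : ℝ} (hr : 0 < r) :
    ∃ N : Finset Y, ∀ p : Y, ∃ q ∈ N, dist p q < r := by
  have h := isCompact_univ (X := Y) |>.totallyBounded
  rw [Metric.totallyBounded_iff] at h
  obtain ⟨t, htf, htcov⟩ := h r hr
  refine ⟨htf.toFinset, fun p => ?_⟩
  have := htcov (Set.mem_univ p)
  simp only [Set.mem_iUnion] at this
  obtain ⟨q, hq, hd⟩ := this
  exact ⟨q, htf.mem_toFinset.2 hq, by simpa [Metric.mem_ball] using hd⟩

lemma card_le_net {E : Finset Γ} {a r : ℝ} (h2r : 2 * r < a)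
    {N : Finset Y} (hN : ∀ p : Y, ∃ q ∈ N, dist p q < r)
    {W : Finset Y}
    (hsep : ∀ x ∈ W, ∀ y ∈ W, x ≠ y → ∃ s ∈ E, a ≤ dist (s • x) (s • y)) :
    W.card ≤ N.card ^ E.card := by
  classical
  have hφ : ∀ w : Y, ∀ s : Γ, ∃ q, q ∈ N ∧ dist (s • w) q < r := fun w s => hN _
  choose φ hφN hφd using hφ
  have hinj : Function.Injective
      (fun w : ↥W => (fun s : ↥E => (⟨φ (w : Y) (s : Γ), hφN _ _⟩ : ↥N))) := by
    intro w w' h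
    by_contra hne
    have hne' : (w : Y) ≠ (w' : Y) := fun hh => hne (Subtype.ext hh)
    obtain ⟨s, hsE, hd⟩ := hsep _ w.2 _ w'.2 hne'
    have heq : φ (w : Y) s = φ (w' : Y) s := by
      have := congrFun h ⟨s, hsE⟩
      exact Subtype.ext_iff.1 this
    have h1 := hφd (w : Y) s
    have h2 := hφd (w' : Y) s
    rw [heq] at h1
    have : dist (s • (w : Y)) (s • (w' : Y)) < 2 * r := by
      calc dist (s • (w : Y)) (s • (w' : Y))
          ≤ dist (s • (w : Y)) (φ (w' : Y) s) + dist (s • (w' : Y)) (φ (w' : Y) s) :=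
            dist_triangle_right _ _ _
        _ < r + r := add_lt_add h1 h2
        _ = 2 * r := by ring
    linarith
  calc W.card = Fintype.card ↥W := (Fintype.card_coe W).symm
    _ ≤ Fintype.card (↥E → ↥N) := Fintype.card_le_of_injective _ hinj
    _ = N.card ^ E.card := by
        rw [Fintype.card_fun]
        simp [Fintype.card_coe]

lemma sepSet_bddAbove {Z : Set Y} {E : Finset Γ} {a r : ℝ} (h2r : 2 * r < a)
    {N : Finset Y} (hN : ∀ p : Y, ∃ q ∈ N, dist p q < r) :
    BddAbove (sepSet Γ Y Z E a) := by
  refine ⟨N.card ^ E.card, ?_⟩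
  rintro n ⟨W, _, rfl, hsep⟩
  exact card_le_net h2r hN hsep

lemma le_sepNum {Z : Set Y} {E : Finset Γ} {a : ℝ} (bdd : BddAbove (sepSet Γ Y Z E a))
    {n : ℕ} (hn : n ∈ sepSet Γ Y Z E a) : n ≤ sepNum Γ Y Z E a :=
  le_csSup bdd hn

lemma sepNum_mem {Z : Set Y} {E : Finset Γ} {a : ℝ} (bdd : BddAbove (sepSet Γ Y Z E a)) :
    sepNum Γ Y Z E a ∈ sepSet Γ Y Z E a :=
  Nat.sSup_mem ⟨0, zero_mem_sepSet Z E a⟩ bdd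

lemma one_le_sepNum {Z : Set Y} (hZ : Z.Nonempty) {E : Finset Γ} {a : ℝ}
    (bdd : BddAbove (sepSet Γ Y Z E a)) : 1 ≤ sepNum Γ Y Z E a := by
  obtain ⟨z, hz⟩ := hZ
  refine le_sepNum bdd ⟨{z}, by simpa, by simp, ?_⟩
  intro x hx y hy hxy
  simp only [Finset.mem_singleton] at hx hy
  exact absurd (hx.trans hy.symm) hxy

lemma sepNum_le_of_forall {Z : Set Y} {E : Finset Γ} {a : ℝ} {m : ℕ}
    (h : ∀ n ∈ sepSet Γ Y Z E a, n ≤ m) : sepNum Γ Y Z E a ≤ m :=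
  csSup_le ⟨0, zero_mem_sepSet Z E a⟩ h

lemma sepNum_mono_scale {Z : Set Y} {E : Finset Γ} {a b : ℝ} (hab : a ≤ b)
    (bdd : BddAbove (sepSet Γ Y Z E a)) : sepNum Γ Y Z E b ≤ sepNum Γ Y Z E a := by
  refine sepNum_le_of_forall ?_
  rintro n ⟨W, hWZ, rfl, hsep⟩
  refine le_sepNum bdd ⟨W, hWZ, rfl, fun x hx y hy hxy => ?_⟩
  obtain ⟨s, hsE, hd⟩ := hsep x hx y hy hxy
  exact ⟨s, hsE, le_trans hab hd⟩

lemma sepNum_mono_set {Z : Set Y} {E E' : Finset Γ} {a : ℝ} (hEE' : E ⊆ E')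
    (bdd : BddAbove (sepSet Γ Y Z E' a)) : sepNum Γ Y Z E a ≤ sepNum Γ Y Z E' a := by
  refine sepNum_le_of_forall ?_
  rintro n ⟨W, hWZ, rfl, hsep⟩
  refine le_sepNum bdd ⟨W, hWZ, rfl, fun x hx y hy hxy => ?_⟩
  obtain ⟨s, hsE, hd⟩ := hsep x hx y hy hxy
  exact ⟨s, hEE' hsE, hd⟩

lemma sepNum_spanning {Z : Set Y} {E : Finset Γ} {a : ℝ} (ha : 0 < a)
    (bdd : BddAbove (sepSet Γ Y Z E a)) :
    ∃ W : Finset Y, (↑W : Set Y) ⊆ Z ∧ W.card = sepNum Γ Y Z E a ∧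
      (∀ x ∈ W, ∀ y ∈ W, x ≠ y → ∃ s ∈ E, a ≤ dist (s • x) (s • y)) ∧
      ∀ z ∈ Z, ∃ w ∈ W, ∀ s ∈ E, dist (s • z) (s • w) < a := by
  classical
  obtain ⟨W, hWZ, hWcard, hWsep⟩ := sepNum_mem bdd
  refine ⟨W, hWZ, hWcard, hWsep, fun z hz => ?_⟩
  by_contra hcon
  push_neg at hcon
  have hcon' : ∀ w ∈ W, ∃ s ∈ E, a ≤ dist (s • z) (s • w) := by
    intro w hw
    obtain ⟨s, hsE, hd⟩ := hcon w hw
    exact ⟨s, hsE, hd⟩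
  have hzW : z ∉ W := by
    intro hzW
    obtain ⟨s, _, hd⟩ := hcon' z hzW
    simp at hd
    linarith
  have hmem : W.card + 1 ∈ sepSet Γ Y Z E a := by
    refine ⟨insert z W, ?_, by rw [Finset.card_insert_of_notMem hzW], ?_⟩
    · intro x hx
      rcases Finset.mem_insert.1 (by exact_mod_cast hx) with rfl | hxW
      · exact hz
      · exact hWZ hxW
    · intro x hx y hy hxy
      rcases Finset.mem_insert.1 hx with rfl | hxW <;> rcases Finset.mem_insert.1 hy with rfl | hyW
      · exact absurd rfl hxy
      · exact hcon' y hyW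
      · obtain ⟨s, hsE, hd⟩ := hcon' x hxW
        exact ⟨s, hsE, by rwa [dist_comm] at hd⟩
      · exact hWsep x hxW y hyW hxy
  have := le_sepNum bdd hmem
  omega

lemma sepNum_le_mul [DecidableEq Γ] {Z : Set Y} {B E : Finset Γ} (hBE : B ⊆ E) {a b r : ℝ}
    (hb : 0 < b) (hba : 2 * b ≤ a) (h2r : 2 * r < b)
    {N : Finset Y} (hN : ∀ p : Y, ∃ q ∈ N, dist p q < r) :
    sepNum Γ Y Z E a ≤ sepNum Γ Y Z B b * N.card ^ (E \ B).card := by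
  classical
  have hba' : b ≤ a := by linarith
  have h2ra : 2 * r < a := by linarith
  have bddB : BddAbove (sepSet Γ Y Z B b) := sepSet_bddAbove h2r hN
  refine sepNum_le_of_forall ?_
  rintro n ⟨W, hWZ, rfl, hWsep⟩
  obtain ⟨V, hVZ, hVcard, _, hVspan⟩ := sepNum_spanning hb bddB
  have hφ : ∀ w : Y, ∀ s : Γ, ∃ q, q ∈ N ∧ dist (s • w) q < r := fun w s => hN _
  choose φ hφN hφd using hφ
  have hv : ∀ w : ↥W, ∃ v, v ∈ V ∧ ∀ s ∈ B, dist (s • (w : Y)) (s • v) < b :=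
    fun w => hVspan _ (hWZ w.2)
  choose ψ hψV hψd using hv
  have hinj : Function.Injective (fun w : ↥W =>
      ((⟨ψ w, hψV w⟩ : ↥V), fun s : ↥(E \ B) => (⟨φ (w : Y) (s : Γ), hφN _ _⟩ : ↥N))) := by
    intro w w' h
    by_contra hne
    have hne' : (w : Y) ≠ (w' : Y) := fun hh => hne (Subtype.ext hh)
    obtain ⟨s, hsE, hd⟩ := hWsep _ w.2 _ w'.2 hne'
    have h1 := congrArg Prod.fst h
    have h2 := congrArg Prod.snd h
    simp only [Subtype.mk.injEq] at h1
    by_cases hsB : s ∈ B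
    · have d1 := hψd w s hsB
      have d2 := hψd w' s hsB
      rw [h1] at d1
      have : dist (s • (w : Y)) (s • (w' : Y)) < 2 * b := by
        calc dist (s • (w : Y)) (s • (w' : Y))
            ≤ dist (s • (w : Y)) (s • (ψ w' : Y)) + dist (s • (w' : Y)) (s • (ψ w' : Y)) :=
              dist_triangle_right _ _ _
          _ < b + b := add_lt_add d1 d2
          _ = 2 * b := by ring
      linarith
    · have hsEB : s ∈ E \ B := Finset.mem_sdiff.2 ⟨hsE, hsB⟩
      have := congrFun h2 ⟨s, hsEB⟩
      have heq : φ (w : Y) s = φ (w' : Y) s := Subtype.ext_iff.1 this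
      have d1 := hφd (w : Y) s
      have d2 := hφd (w' : Y) s
      rw [heq] at d1
      have : dist (s • (w : Y)) (s • (w' : Y)) < 2 * r := by
        calc dist (s • (w : Y)) (s • (w' : Y))
            ≤ dist (s • (w : Y)) (φ (w' : Y) s) + dist (s • (w' : Y)) (φ (w' : Y) s) :=
              dist_triangle_right _ _ _
          _ < r + r := add_lt_add d1 d2
          _ = 2 * r := by ring
      linarith
  calc W.card = Fintype.card ↥W := (Fintype.card_coe W).symm
    _ ≤ Fintype.card (↥V × (↥(E \ B) → ↥N)) := Fintype.card_le_of_injective _ hinj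
    _ = V.card * N.card ^ (E \ B).card := by
        rw [Fintype.card_prod, Fintype.card_fun]
        simp [Fintype.card_coe]
    _ = sepNum Γ Y Z B b * N.card ^ (E \ B).card := by rw [hVcard]

end AuxGOE
section AuxGOE2

open Metric Filter GOE

variable {Γ Y : Type*} [Group Γ] [MetricSpace Y] [MulAction Γ Y]

/-- The set whose `sInf` is `covNumOn`. -/
def covSet (Γ Y : Type*) [Group Γ] [TopologicalSpace Y] [MulAction Γ Y]
    (Z : Set Y) (U : Finset (Set Y)) (E : Finset Γ) : Set ℕ :=
  {n : ℕ | ∃ c : Finset (Γ → Set Y), c.card = n ∧ (∀ f ∈ c, ∀ s : Γ, f s ∈ U) ∧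
    Z ⊆ ⋃ f ∈ c, ⋂ s ∈ E, (fun x : Y => s • x) ⁻¹' f s}

lemma covNumOn_def (Z : Set Y) (U : Finset (Set Y)) (E : Finset Γ) :
    covNumOn Γ Y Z U E = sInf (covSet Γ Y Z U E) := rfl

lemma covNum_le_sepNum {Z : Set Y} (hZne : Z.Nonempty) (hZinv : ∀ s : Γ, ∀ z ∈ Z, s • z ∈ Z)
    {U : Finset (Set Y)} {E : Finset Γ} {δ : ℝ} (hδ : 0 < δ)
    (hLeb : ∀ z ∈ Z, ∃ V ∈ U, ball z δ ⊆ V)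
    (bdd : BddAbove (sepSet Γ Y Z E δ)) :
    covNumOn Γ Y Z U E ≤ sepNum Γ Y Z E δ ∧ (covSet Γ Y Z U E).Nonempty := by
  classical
  obtain ⟨W, hWZ, hWcard, _, hWspan⟩ := sepNum_spanning hδ bdd
  obtain ⟨z0, hz0⟩ := hZne
  obtain ⟨u0, hu0, _⟩ := hLeb z0 hz0
  have hV : ∀ w : Y, ∀ s : Γ, ∃ V, V ∈ U ∧ (s ∈ E → w ∈ Z → ball (s • w) δ ⊆ V) := by
    intro w s
    by_cases h : s ∈ E ∧ w ∈ Z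
    · obtain ⟨V, hVU, hVb⟩ := hLeb (s • w) (hZinv s w h.2)
      exact ⟨V, hVU, fun _ _ => hVb⟩
    · exact ⟨u0, hu0, fun h1 h2 => absurd ⟨h1, h2⟩ h⟩
  choose Vf hVfU hVfb using hV
  set c : Finset (Γ → Set Y) := W.image (fun w => fun s => Vf w s) with hc
  have hccov : Z ⊆ ⋃ f ∈ c, ⋂ s ∈ E, (fun x : Y => s • x) ⁻¹' f s := by
    intro z hz
    obtain ⟨w, hwW, hwd⟩ := hWspan z hz
    refine Set.mem_biUnion (Finset.mem_image_of_mem _ hwW) ?_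
    refine Set.mem_iInter₂.2 fun s hs => ?_
    exact hVfb w s hs (hWZ hwW) (by simpa [Metric.mem_ball] using hwd s hs)
  have hmem : c.card ∈ covSet Γ Y Z U E := by
    refine ⟨c, rfl, ?_, hccov⟩
    intro f hf s
    obtain ⟨w, _, rfl⟩ := Finset.mem_image.1 hf
    exact hVfU w s
  have hcard : c.card ≤ sepNum Γ Y Z E δ := hWcard ▸ Finset.card_image_le
  exact ⟨le_trans (Nat.sInf_le hmem) hcard, ⟨c.card, hmem⟩⟩

lemma sepNum_le_covNum {Z' : Set Y} {U : Finset (Set Y)} {E : Finset Γ} {a : ℝ}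
    (hEne : E.Nonempty) (hdiam : ∀ V ∈ U, ∀ x ∈ V, ∀ y ∈ V, dist x y < a)
    (hne : (covSet Γ Y Z' U E).Nonempty) :
    sepNum Γ Y Z' E a ≤ covNumOn Γ Y Z' U E := by
  classical
  refine sepNum_le_of_forall ?_
  rintro n ⟨W, hWZ, rfl, hWsep⟩
  refine le_csInf hne ?_
  rintro m ⟨c, rfl, hcU, hccov⟩
  have hf : ∀ w : ↥W, ∃ f, f ∈ c ∧ (w : Y) ∈ ⋂ s ∈ E, (fun x : Y => s • x) ⁻¹' f s := by
    intro w
    have := hccov (hWZ w.2)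
    simpa [Set.mem_iUnion] using this
  choose f hfc hfm using hf
  have hinj : Function.Injective (fun w : ↥W => (⟨f w, hfc w⟩ : ↥c)) := by
    intro w w' h
    by_contra hne'
    have hne'' : (w : Y) ≠ (w' : Y) := fun hh => hne' (Subtype.ext hh)
    obtain ⟨s, hsE, hd⟩ := hWsep _ w.2 _ w'.2 hne''
    have heq : f w = f w' := Subtype.ext_iff.1 h
    have m1 := Set.mem_iInter₂.1 (hfm w) s hsE
    have m2 := Set.mem_iInter₂.1 (hfm w') s hsE
    rw [heq] at m1
    have := hdiam (f w' s) (hcU _ (hfc w') s) _ m1 _ m2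
    linarith
  calc W.card = Fintype.card ↥W := (Fintype.card_coe W).symm
    _ ≤ Fintype.card ↥c := Fintype.card_le_of_injective _ hinj
    _ = c.card := Fintype.card_coe c

lemma sepNum_le_enlarge {Z : Set Y} {E D DE : Finset Γ} {δ κ : ℝ}
    (hD : ∀ x y : Y, δ ≤ dist x y → ∃ d ∈ D, κ / 2 < dist (d • x) (d • y))
    (hDE : ∀ s ∈ E, ∀ d ∈ D, d * s ∈ DE)
    (bdd : BddAbove (sepSet Γ Y Z DE (κ / 2))) :
    sepNum Γ Y Z E δ ≤ sepNum Γ Y Z DE (κ / 2) := by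
  refine sepNum_le_of_forall ?_
  rintro n ⟨W, hWZ, rfl, hsep⟩
  refine le_sepNum bdd ⟨W, hWZ, rfl, fun x hx y hy hxy => ?_⟩
  obtain ⟨s, hsE, hd⟩ := hsep x hx y hy hxy
  obtain ⟨d, hdD, hd2⟩ := hD _ _ hd
  refine ⟨d * s, hDE s hsE d hdD, ?_⟩
  rw [mul_smul, mul_smul]
  exact hd2.le

lemma exists_expansive_D [CompactSpace Y] (hact : ContAction Γ Y) {κ : ℝ}
    (hexp : ∀ x y : Y, x ≠ y → ∃ s : Γ, κ < dist (s • x) (s • y))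
    {δ : ℝ} (hδ : 0 < δ) (hκ : 0 < κ) :
    ∃ D : Finset Γ, (1 : Γ) ∈ D ∧
      ∀ x y : Y, δ ≤ dist x y → ∃ d ∈ D, κ / 2 < dist (d • x) (d • y) := by
  classical
  set K : Set (Y × Y) := {p | δ ≤ dist p.1 p.2} with hK
  have hKc : IsCompact K :=
    (isClosed_le continuous_const (continuous_fst.dist continuous_snd)).isCompact
  have hcov : K ⊆ ⋃ s : Γ, {p : Y × Y | κ / 2 < dist (s • p.1) (s • p.2)} := by
    intro p hp
    have hne : p.1 ≠ p.2 := by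
      intro h
      have : dist p.1 p.2 = 0 := by rw [h, dist_self]
      have hp' : δ ≤ dist p.1 p.2 := hp
      linarith
    obtain ⟨s, hs⟩ := hexp _ _ hne
    exact Set.mem_iUnion.2 ⟨s, by simp only [Set.mem_setOf_eq]; linarith⟩
  obtain ⟨D, hD⟩ := hKc.elim_finite_subcover _
    (fun s => isOpen_lt continuous_const
      (((hact s).comp continuous_fst).dist ((hact s).comp continuous_snd))) hcov
  refine ⟨insert 1 D, Finset.mem_insert_self _ _, fun x y hxy => ?_⟩
  have hm := hD (show (x, y) ∈ K from hxy)
  simp only [Set.mem_iUnion, Set.mem_setOf_eq] at hm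
  obtain ⟨d, hdD, hd⟩ := hm
  exact ⟨d, Finset.mem_insert_of_mem hdD, hd⟩

lemma exists_packing [DecidableEq Γ] (P : Finset Γ) (hsym : ∀ p ∈ P, p⁻¹ ∈ P) :
    ∀ A : Finset Γ, ∃ C, C ⊆ A ∧
      (∀ c ∈ C, ∀ c' ∈ C, c ≠ c' → ∀ p ∈ P, p * c ≠ c') ∧
      A.card ≤ C.card * (P.card + 1) := by
  intro A
  induction A using Finset.strongInduction with
  | _ A ih =>
    rcases A.eq_empty_or_nonempty with rfl | ⟨a, ha⟩
    · exact ⟨∅, Finset.Subset.refl _, by simp, by simp⟩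
    · set R : Finset Γ := insert a (P.image (· * a)) with hR
      have haR : a ∈ R := Finset.mem_insert_self _ _
      have hss : A \ R ⊂ A := by
        refine (Finset.ssubset_iff_of_subset (Finset.sdiff_subset)).2 ⟨a, ha, ?_⟩
        simp [haR]
      obtain ⟨C', hC'sub, hC'pair, hC'card⟩ := ih _ hss
      have haC' : a ∉ C' := fun h => (Finset.mem_sdiff.1 (hC'sub h)).2 haR
      refine ⟨insert a C', ?_, ?_, ?_⟩
      · intro x hx
        rcases Finset.mem_insert.1 hx with rfl | hx'
        · exact ha
        · exact (Finset.mem_sdiff.1 (hC'sub hx')).1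
      · intro c hc c' hc' hcc' p hp heq
        rcases Finset.mem_insert.1 hc with rfl | hcC' <;>
          rcases Finset.mem_insert.1 hc' with rfl | hc'C'
        · exact absurd rfl hcc'
        · -- c = a, c' ∈ C'
          have : c' ∈ R := Finset.mem_insert_of_mem
            (Finset.mem_image.2 ⟨p, hp, heq⟩)
          exact (Finset.mem_sdiff.1 (hC'sub hc'C')).2 this
        · -- c ∈ C', c' = a
          have : c ∈ R := by
            refine Finset.mem_insert_of_mem (Finset.mem_image.2 ⟨p⁻¹, hsym p hp, ?_⟩)
            show p⁻¹ * c' = c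
            rw [← heq]
            group
          exact (Finset.mem_sdiff.1 (hC'sub hcC')).2 this
        · exact hC'pair c hcC' c' hc'C' hcc' p hp heq
      · have h1 : A.card ≤ (A \ R).card + R.card := by
          have : A ⊆ (A \ R) ∪ R := by
            intro x hx
            by_cases hxR : x ∈ R
            · exact Finset.mem_union_right _ hxR
            · exact Finset.mem_union_left _ (Finset.mem_sdiff.2 ⟨hx, hxR⟩)
          calc A.card ≤ ((A \ R) ∪ R).card := Finset.card_le_card this
            _ ≤ (A \ R).card + R.card := Finset.card_union_le _ _
        have h2 : R.card ≤ P.card + 1 := by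
          calc R.card ≤ (P.image (· * a)).card + 1 := Finset.card_insert_le _ _
            _ ≤ P.card + 1 := by
                have := Finset.card_image_le (s := P) (f := (· * a))
                omega
        calc A.card ≤ (A \ R).card + R.card := h1
          _ ≤ C'.card * (P.card + 1) + (P.card + 1) := Nat.add_le_add hC'card h2
          _ = (C'.card + 1) * (P.card + 1) := by ring
          _ = (insert a C').card * (P.card + 1) := by
              rw [Finset.card_insert_of_notMem haC']

lemma folner_card_tendsto [Infinite Γ] {F : ℕ → Finset Γ} (hF : IsFolner Γ F) :
    Tendsto (fun n => (F n).card) atTop atTop := by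
  classical
  rw [Filter.tendsto_atTop]
  intro b
  obtain ⟨K, -, hKcard⟩ :=
    Set.Infinite.exists_subset_card_eq (Set.infinite_univ (α := Γ)) (2 * b + 1)
  have hKne : K.Nonempty := Finset.card_pos.1 (by omega)
  have h0 := hF.2 K hKne
  have hev : ∀ᶠ n in atTop,
      (((K.biUnion fun k => (F n).image fun t => k * t) ∆ (F n)).card : ℝ) / (F n).card < 1 := by
    exact h0.eventually (eventually_lt_nhds (by norm_num))
  filter_upwards [hev] with n hn
  by_contra hcon
  push_neg at hcon
  -- (F n).card < b
  set KF := K.biUnion fun k => (F n).image fun t => k * t with hKF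
  obtain ⟨t0, ht0⟩ := hF.1 n
  have hKsub : K.image (· * t0) ⊆ KF := by
    intro x hx
    obtain ⟨k, hk, rfl⟩ := Finset.mem_image.1 hx
    exact Finset.mem_biUnion.2 ⟨k, hk, Finset.mem_image.2 ⟨t0, ht0, rfl⟩⟩
  have hKFcard : 2 * b + 1 ≤ KF.card := by
    have : (K.image (· * t0)).card = K.card :=
      Finset.card_image_of_injective _ (mul_left_injective t0)
    calc 2 * b + 1 = K.card := hKcard.symm
      _ = (K.image (· * t0)).card := this.symm
      _ ≤ KF.card := Finset.card_le_card hKsub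
  have hsub2 : KF \ F n ⊆ KF ∆ (F n) := by
    intro x hx
    exact Finset.mem_union_left _ hx
  have hsymcard : b + 1 ≤ (KF ∆ (F n)).card := by
    have h3 : KF.card ≤ (KF \ F n).card + (F n).card := by
      have : KF ⊆ (KF \ F n) ∪ F n := by
        intro x hx
        by_cases hxF : x ∈ F n
        · exact Finset.mem_union_right _ hxF
        · exact Finset.mem_union_left _ (Finset.mem_sdiff.2 ⟨hx, hxF⟩)
      calc KF.card ≤ ((KF \ F n) ∪ F n).card := Finset.card_le_card this
        _ ≤ (KF \ F n).card + (F n).card := Finset.card_union_le _ _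
    have := Finset.card_le_card hsub2
    omega
  have hpos : (0 : ℝ) < (F n).card := by
    exact_mod_cast Finset.card_pos.2 (hF.1 n)
  rw [div_lt_one hpos] at hn
  have : ((KF ∆ (F n)).card : ℝ) < (F n).card := hn
  have hlt : (KF ∆ (F n)).card < (F n).card := by exact_mod_cast this
  omega

end AuxGOE2
section AuxGOE3

open Metric Filter GOE

lemma logNat_mono {m n : ℕ} (h : m ≤ n) : Real.log m ≤ Real.log n := by
  rcases Nat.eq_zero_or_pos m with rfl | hm
  · simp only [Nat.cast_zero, Real.log_zero]
    rcases Nat.eq_zero_or_pos n with rfl | hn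
    · simp
    · exact Real.log_nonneg (by exact_mod_cast hn)
  · exact Real.log_le_log (by exact_mod_cast hm) (by exact_mod_cast h)

lemma ereal_limsup_le {v : ℕ → ℝ} {c : ℝ} (h : ∀ᶠ n in atTop, v n ≤ c) :
    Filter.limsup (fun n => ((v n : ℝ) : EReal)) atTop ≤ (c : EReal) :=
  limsup_le_of_le (by isBoundedDefault) (h.mono fun n hn => EReal.coe_le_coe_iff.2 hn)

lemma ereal_le_limsup {v : ℕ → ℝ} {c : ℝ} (h : ∃ᶠ n in atTop, c ≤ v n) :
    (c : EReal) ≤ Filter.limsup (fun n => ((v n : ℝ) : EReal)) atTop :=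
  le_limsup_of_frequently_le' (h.mono fun n hn => EReal.coe_le_coe_iff.2 hn)

lemma ereal_le_of_forall_add {L : EReal} {t : ℝ}
    (h : ∀ γ : ℝ, 0 < γ → L ≤ ((t + γ : ℝ) : EReal)) : L ≤ (t : EReal) := by
  by_contra hlt
  push_neg at hlt
  obtain ⟨r, hr1, hr2⟩ := EReal.exists_between_coe_real hlt
  have htr : t < r := EReal.coe_lt_coe_iff.1 hr1
  have := h (r - t) (by linarith)
  rw [show t + (r - t) = r by ring] at this
  exact absurd hr2 (not_lt.2 this)

lemma ereal_le_of_forall_sub {L : EReal} {t : ℝ}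
    (h : ∀ γ : ℝ, 0 < γ → ((t - γ : ℝ) : EReal) ≤ L) : (t : EReal) ≤ L := by
  by_contra hlt
  push_neg at hlt
  obtain ⟨r, hr1, hr2⟩ := EReal.exists_between_coe_real hlt
  have htr : r < t := EReal.coe_lt_coe_iff.1 hr2
  have := h (t - r) (by linarith)
  rw [show t - (t - r) = r by ring] at this
  exact absurd hr1 (not_lt.2 this)

end AuxGOE3
section AuxGOE4

open Metric Filter GOE

set_option maxHeartbeats 1000000 in
lemma entUpper {Γ Y : Type*} [Group Γ] [MetricSpace Y] [CompactSpace Y] [MulAction Γ Y]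
    (hact : ContAction Γ Y) (F : ℕ → Finset Γ) (hF : IsFolner Γ F)
    {κ : ℝ} (hκ : 0 < κ)
    (hexp2 : ∀ x y : Y, x ≠ y → ∃ s : Γ, κ < dist (s • x) (s • y))
    (Z : Set Y) (hZne : Z.Nonempty) (hZcl : IsClosed Z)
    (hZinv : ∀ s : Γ, ∀ z ∈ Z, s • z ∈ Z)
    {N₁ : Finset Y} (hN₁ : ∀ p : Y, ∃ q ∈ N₁, dist p q < κ / 32) :
    topEntOn Γ Y Z F ≤
      ((limsup (fun n => Real.log (sepNum Γ Y Z (F n) (κ / 4)) / (F n).card) atTop : ℝ) :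
        EReal) := by
  classical
  obtain ⟨z0, hz0⟩ := hZne
  have hZne : Z.Nonempty := ⟨z0, hz0⟩
  have hcardpos : ∀ n, 0 < ((F n).card : ℝ) := fun n => by
    exact_mod_cast Finset.card_pos.2 (hF.1 n)
  set M := N₁.card with hMdef
  have hM1 : 1 ≤ M := by
    obtain ⟨q, hq, -⟩ := hN₁ z0
    exact Finset.card_pos.2 ⟨q, hq⟩
  set sZ : ℕ → ℕ := fun n => sepNum Γ Y Z (F n) (κ / 4) with hsZdef
  have bddsZ : ∀ E : Finset Γ, BddAbove (sepSet Γ Y Z E (κ / 4)) := fun E =>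
    sepSet_bddAbove (by linarith) hN₁
  have h1sZ : ∀ n, 1 ≤ sZ n := fun n => one_le_sepNum hZne (bddsZ (F n))
  have hsZub : ∀ n, sZ n ≤ M ^ (F n).card := fun n =>
    sepNum_le_of_forall fun m hm => by
      obtain ⟨W, _, rfl, hsep⟩ := hm
      exact card_le_net (by linarith) hN₁ hsep
  set u : ℕ → ℝ := fun n => Real.log (sZ n) / (F n).card with hudef
  have huub : ∀ n, u n ≤ Real.log M := by
    intro n
    have hun : u n = Real.log (sZ n) / (F n).card := rfl
    rw [hun, div_le_iff₀ (hcardpos n)]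
    calc Real.log (sZ n) ≤ Real.log ((M ^ (F n).card : ℕ) : ℝ) := logNat_mono (hsZub n)
      _ = (F n).card * Real.log M := by rw [Nat.cast_pow, Real.log_pow]
      _ = Real.log M * (F n).card := by ring
  set τ : ℝ := limsup u atTop with hτdef
  have hbddU : IsBoundedUnder (· ≤ ·) atTop u := isBoundedUnder_of ⟨Real.log M, huub⟩
  rw [GOE.topEntOn]
  refine iSup_le fun U => iSup_le fun hU => ?_
  obtain ⟨hUopen, hUcov⟩ := hU
  obtain ⟨δL, hδL, hLeb⟩ := lebesgue_number_lemma_of_metric_sUnion hZcl.isCompact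
    (fun t ht => hUopen t ht) hUcov
  set δ₀ : ℝ := min δL (κ / 4) with hδ₀def
  have hδ₀ : 0 < δ₀ := lt_min hδL (by linarith)
  obtain ⟨D, h1D, hD⟩ := exists_expansive_D hact hexp2 hδ₀ hκ
  set DF : ℕ → Finset Γ := fun n => D.biUnion fun d => (F n).image fun t => d * t
    with hDFdef
  have hFsubDF : ∀ n, F n ⊆ DF n := by
    intro n s hs
    exact Finset.mem_biUnion.2 ⟨1, h1D, Finset.mem_image.2 ⟨s, hs, one_mul s⟩⟩
  have hDmem : ∀ n, ∀ s ∈ F n, ∀ d ∈ D, d * s ∈ DF n := fun n s hs d hd =>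
    Finset.mem_biUnion.2 ⟨d, hd, Finset.mem_image.2 ⟨s, hs, rfl⟩⟩
  have hchain : ∀ n, covNumOn Γ Y Z U (F n) ≤ sZ n * M ^ ((DF n) \ (F n)).card := by
    intro n
    obtain ⟨N₂, hN₂⟩ := exists_net (Y := Y) (show (0 : ℝ) < δ₀ / 3 by linarith)
    have bddδ : BddAbove (sepSet Γ Y Z (F n) δ₀) :=
      sepSet_bddAbove (by linarith) hN₂
    have hLeb' : ∀ z ∈ Z, ∃ V ∈ U, ball z δ₀ ⊆ V := by
      intro z hz
      obtain ⟨V, hVU, hVb⟩ := hLeb z hz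
      exact ⟨V, hVU, Set.Subset.trans (Metric.ball_subset_ball (min_le_left _ _)) hVb⟩
    have c1 := (covNum_le_sepNum hZne hZinv hδ₀ hLeb' bddδ).1
    have c2 : sepNum Γ Y Z (F n) δ₀ ≤ sepNum Γ Y Z (DF n) (κ / 2) :=
      sepNum_le_enlarge hD (hDmem n) (sepSet_bddAbove (by linarith) hN₁)
    have c3 : sepNum Γ Y Z (DF n) (κ / 2) ≤
        sepNum Γ Y Z (F n) (κ / 4) * M ^ ((DF n) \ (F n)).card :=
      sepNum_le_mul (hFsubDF n) (by linarith) (by linarith) (by linarith) hN₁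
    exact le_trans c1 (le_trans c2 c3)
  have hreal : ∀ n, Real.log (covNumOn Γ Y Z U (F n)) / (F n).card ≤
      u n + ((DF n ∆ F n).card : ℝ) / (F n).card * Real.log M := by
    intro n
    have he : ((DF n) \ (F n)).card ≤ (DF n ∆ F n).card := by
      apply Finset.card_le_card
      intro x hx
      exact Finset.mem_union_left _ hx
    have hM0 : (0 : ℝ) ≤ Real.log M := Real.log_nonneg (by exact_mod_cast hM1)
    have hlog : Real.log (covNumOn Γ Y Z U (F n)) ≤
        Real.log (sZ n) + ((DF n ∆ F n).card : ℝ) * Real.log M := by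
      calc Real.log (covNumOn Γ Y Z U (F n))
          ≤ Real.log (((sZ n * M ^ ((DF n) \ (F n)).card : ℕ)) : ℝ) :=
            logNat_mono (hchain n)
        _ = Real.log (sZ n) + (((DF n) \ (F n)).card : ℝ) * Real.log M := by
            push_cast
            rw [Real.log_mul (by exact_mod_cast Nat.one_le_iff_ne_zero.1 (h1sZ n))
              (by positivity), Real.log_pow]
        _ ≤ Real.log (sZ n) + ((DF n ∆ F n).card : ℝ) * Real.log M := by
            have hcast : (((DF n) \ (F n)).card : ℝ) ≤ ((DF n ∆ F n).card : ℝ) := by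
              exact_mod_cast he
            nlinarith
    have hun : u n = Real.log (sZ n) / (F n).card := rfl
    calc Real.log (covNumOn Γ Y Z U (F n)) / (F n).card
        ≤ (Real.log (sZ n) + ((DF n ∆ F n).card : ℝ) * Real.log M) / (F n).card := by
          exact div_le_div_of_nonneg_right hlog (hcardpos n).le
      _ = u n + ((DF n ∆ F n).card : ℝ) / (F n).card * Real.log M := by
          rw [hun]
          field_simp
  refine ereal_le_of_forall_add fun γ hγ => ?_
  have hev1 : ∀ᶠ n in atTop, u n < τ + γ / 2 :=
    eventually_lt_of_limsup_lt (by linarith) hbddU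
  have hb0 : Tendsto (fun n => ((DF n ∆ F n).card : ℝ) / (F n).card * Real.log M)
      atTop (𝓝 0) := by
    have h00 := hF.2 D ⟨1, h1D⟩
    have h01 := h00.mul_const (Real.log M)
    rw [zero_mul] at h01
    exact h01
  have hev2 : ∀ᶠ n in atTop,
      ((DF n ∆ F n).card : ℝ) / (F n).card * Real.log M < γ / 2 :=
    hb0.eventually (eventually_lt_nhds (by linarith))
  refine limsup_le_of_le (by isBoundedDefault) ?_
  filter_upwards [hev1, hev2] with n h1 h2
  have h3 := hreal n
  exact EReal.coe_le_coe_iff.2 (by linarith)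

end AuxGOE4
section AuxGOE5

open Metric Filter GOE

set_option maxHeartbeats 3000000 in
lemma claimA {Γ Y : Type*} [Group Γ] [MetricSpace Y] [MulAction Γ Y]
    (Z : Set Y) (hZne : Z.Nonempty) (hZinv : ∀ s : Γ, ∀ z ∈ Z, s • z ∈ Z)
    (y : Y) {ε κ : ℝ} (hε : 0 < ε) (hε32 : ε ≤ κ / 32)
    (hyd : ∀ z ∈ Z, 3 * ε ≤ dist y z)
    {Fsp : Finset Γ} (hFspsym : ∀ s ∈ Fsp, s⁻¹ ∈ Fsp)
    (hspec : ∀ (J : Type) (_ : Fintype J) (Fj : J → Finset Γ),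
      (∀ i j : J, i ≠ j → ∀ f ∈ Fsp, ∀ s ∈ Fj i, f * s ∉ Fj j) →
      ∀ xj : J → Y, ∃ x : Y, ∀ j : J, ∀ s ∈ Fj j, dist (s • x) (s • xj j) ≤ ε)
    {N₁ Nε : Finset Y} (hN₁ : ∀ p : Y, ∃ q ∈ N₁, dist p q < κ / 32)
    (hNε : ∀ p : Y, ∃ q ∈ Nε, dist p q < ε / 3)
    {E C : Finset Γ} (hCE : C ⊆ E)
    (hpair : ∀ c ∈ C, ∀ c' ∈ C, c ≠ c' → ∀ p ∈ Fsp, p * c ≠ c')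
    (kk : ℕ) (hkk : kk * (2 * N₁.card ^ Fsp.card) ≤ C.card) :
    2 ^ kk * sepNum Γ Y Z E (κ / 4) ≤ sepNum Γ Y Set.univ E ε := by
  classical
  obtain ⟨z0, hz0⟩ := hZne
  have hZne : Z.Nonempty := ⟨z0, hz0⟩
  have hκ : 0 < κ := by linarith
  set f := Fsp.card with hfdef
  set M := N₁.card with hMdef
  have hM1 : 1 ≤ M := by
    obtain ⟨q, hq, -⟩ := hN₁ z0
    exact Finset.card_pos.2 ⟨q, hq⟩
  set Kc : ℕ := 2 * M ^ f with hKcdef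
  set sZE : ℕ := sepNum Γ Y Z E (κ / 4) with hsZEdef
  obtain ⟨C', hC'sub, hC'card⟩ := Finset.exists_subset_card_eq hkk
  have eqv : Fin kk × Fin Kc ≃ ↥C' :=
    ((finProdFinEquiv).trans (finCongr hC'card.symm)).trans C'.equivFin.symm
  set cfun : Fin kk × Fin Kc → Γ := fun p => (eqv p : Γ) with hcfundef
  have hcfun_mem : ∀ p, cfun p ∈ C := fun p => hC'sub (eqv p).2
  have hcfun_inj : Function.Injective cfun := fun p q h =>
    eqv.injective (Subtype.ext h)
  set cg : (Fin kk → Fin Kc) → Fin kk → Γ := fun g i => cfun (i, g i) with hcgdef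
  set Bg : (Fin kk → Fin Kc) → Finset Γ := fun g =>
    E \ (Finset.univ.biUnion fun i : Fin kk => Fsp.image (· * cg g i)) with hBgdef
  have hBgsub : ∀ g, Bg g ⊆ E := fun g => Finset.sdiff_subset
  have hcg_memB : ∀ g g' : Fin kk → Fin Kc, ∀ i : Fin kk,
      g i ≠ g' i → cg g i ∈ Bg g' := by
    intro g g' i hne
    refine Finset.mem_sdiff.2 ⟨hCE (hcfun_mem (i, g i)), ?_⟩
    intro hmem
    obtain ⟨j, -, hj⟩ := Finset.mem_biUnion.1 hmem
    by_cases hcc : cg g i = cg g' j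
    · have h2 := hcfun_inj hcc
      have hij : i = j := (Prod.mk.injEq _ _ _ _ ▸ h2).1
      have h3 : g i = g' j := (Prod.mk.injEq _ _ _ _ ▸ h2).2
      rw [← hij] at h3
      exact hne h3
    · obtain ⟨p, hp, hpe⟩ := Finset.mem_image.1 hj
      exact hpair _ (hcfun_mem (j, g' j)) _ (hcfun_mem (i, g i))
        (fun hh => hcc hh.symm) p hp hpe
  have hWex : ∀ g : Fin kk → Fin Kc,
      sepNum Γ Y Z (Bg g) (4 * ε) ∈ sepSet Γ Y Z (Bg g) (4 * ε) := fun g =>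
    sepNum_mem (sepSet_bddAbove (by linarith) hNε)
  choose W hWZ' hWcard' hWsep' using fun g => hWex g
  have hxex : ∀ g : Fin kk → Fin Kc, ∀ w : Y, ∃ x : Y, w ∈ W g →
      ((∀ s ∈ Bg g, dist (s • x) (s • w) ≤ ε) ∧
        ∀ i : Fin kk, dist ((cg g i) • x) y ≤ ε) := by
    intro g w
    by_cases hw : w ∈ W g
    · set Fj : Option (Fin kk) → Finset Γ := fun j =>
        Option.rec (Bg g) (fun i => {cg g i}) j with hFjdef
      have hdisj : ∀ i j : Option (Fin kk), i ≠ j →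
          ∀ fs ∈ Fsp, ∀ s ∈ Fj i, fs * s ∉ Fj j := by
        rintro (_ | ii) (_ | jj) hij fs hfs s hs hmem
        · exact hij rfl
        · have hsB : s ∈ Bg g := hs
          have heq : fs * s = cg g jj := Finset.mem_singleton.1 hmem
          have h5 : s ∈ Fsp.image (· * cg g jj) := by
            refine Finset.mem_image.2 ⟨fs⁻¹, hFspsym fs hfs, ?_⟩
            show fs⁻¹ * cg g jj = s
            rw [← heq]; group
          exact (Finset.mem_sdiff.1 hsB).2
            (Finset.mem_biUnion.2 ⟨jj, Finset.mem_univ _, h5⟩)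
        · have hseq : s = cg g ii := Finset.mem_singleton.1 hs
          have h5 : fs * s ∈ Fsp.image (· * cg g ii) :=
            Finset.mem_image.2 ⟨fs, hfs, by rw [hseq]⟩
          exact (Finset.mem_sdiff.1 hmem).2
            (Finset.mem_biUnion.2 ⟨ii, Finset.mem_univ _, h5⟩)
        · have hseq : s = cg g ii := Finset.mem_singleton.1 hs
          have heq : fs * s = cg g jj := Finset.mem_singleton.1 hmem
          have hiijj : ii ≠ jj := fun hh => hij (by rw [hh])
          have hne : cg g ii ≠ cg g jj := fun hh => by
            have h6 := hcfun_inj hh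
            exact hiijj ((Prod.mk.injEq _ _ _ _ ▸ h6).1)
          refine hpair _ (hcfun_mem (ii, g ii)) _ (hcfun_mem (jj, g jj)) hne fs hfs ?_
          calc fs * cg g ii = fs * s := by rw [hseq]
            _ = cg g jj := heq
      obtain ⟨x, hx⟩ := hspec (Option (Fin kk)) inferInstance Fj hdisj
        (fun j => Option.rec w (fun i => (cg g i)⁻¹ • y) j)
      refine ⟨x, fun _ => ⟨fun s hs => hx none s hs, fun i => ?_⟩⟩
      have h7 := hx (some i) (cg g i) (Finset.mem_singleton_self _)
      simpa [smul_inv_smul] using h7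
    · exact ⟨y, fun h => absurd h hw⟩
  choose xp hxp using hxex
  set I : Finset (Σ _ : Fin kk → Fin Kc, Y) :=
    Finset.univ.sigma (fun g => W g) with hIdef
  set φ : (Σ _ : Fin kk → Fin Kc, Y) → Y := fun p => xp p.1 p.2 with hφdef
  have hsepfam : ∀ p ∈ I, ∀ q ∈ I, p ≠ q →
      ∃ s ∈ E, ε ≤ dist (s • φ p) (s • φ q) := by
    rintro ⟨g, w⟩ hp ⟨g', w'⟩ hq hpq
    have hw : w ∈ W g := (Finset.mem_sigma.1 hp).2
    have hw' : w' ∈ W g' := (Finset.mem_sigma.1 hq).2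
    obtain ⟨hx1, hx2⟩ := hxp g w hw
    obtain ⟨hx1', hx2'⟩ := hxp g' w' hw'
    by_cases hg : g = g'
    · subst hg
      have hww' : w ≠ w' := by
        intro hh; exact hpq (by rw [hh])
      obtain ⟨s, hsB, hd⟩ := hWsep' g w hw w' hw' hww'
      refine ⟨s, hBgsub g hsB, ?_⟩
      have d1 := hx1 s hsB
      have d2 := hx1' s hsB
      have htri : dist (s • w) (s • w') ≤
          dist (s • w) (s • xp g w) + dist (s • xp g w) (s • xp g w') +
            dist (s • xp g w') (s • w') := dist_triangle4 _ _ _ _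
      show ε ≤ dist (s • xp g w) (s • xp g w')
      have e1 : dist (s • w) (s • xp g w) = dist (s • xp g w) (s • w) := dist_comm _ _
      have e2 : dist (s • xp g w') (s • w') = dist (s • w') (s • xp g w') := dist_comm _ _
      linarith
    · obtain ⟨i, hi⟩ := Function.ne_iff.1 hg
      set c := cg g i with hcdef
      have hcF : c ∈ E := hCE (hcfun_mem (i, g i))
      refine ⟨c, hcF, ?_⟩
      have d1 : dist (c • xp g w) y ≤ ε := hx2 i
      have hcB : c ∈ Bg g' := hcg_memB g g' i hi
      have d2 : dist (c • xp g' w') (c • w') ≤ ε := hx1' c hcB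
      have d3 : 3 * ε ≤ dist y (c • w') := hyd _ (hZinv c w' (hWZ' g' hw'))
      have htri : dist y (c • w') ≤
          dist y (c • xp g w) + dist (c • xp g w) (c • xp g' w') +
            dist (c • xp g' w') (c • w') := dist_triangle4 _ _ _ _
      rw [dist_comm y (c • xp g w)] at htri
      show ε ≤ dist (c • xp g w) (c • xp g' w')
      linarith
  have hinjφ : Set.InjOn φ ↑I := by
    intro p hp q hq hpq
    by_contra hne
    obtain ⟨s, -, hd⟩ := hsepfam p hp q hq hne
    rw [hpq] at hd
    simp only [dist_self] at hd
    linarith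
  set WY : Finset Y := I.image φ with hWYdef
  have hWYcard : WY.card = I.card := Finset.card_image_of_injOn hinjφ
  have hWYsep : ∀ x ∈ WY, ∀ x' ∈ WY, x ≠ x' →
      ∃ s ∈ E, ε ≤ dist (s • x) (s • x') := by
    intro x hx x' hx' hxx'
    obtain ⟨p, hp, rfl⟩ := Finset.mem_image.1 hx
    obtain ⟨q, hq, rfl⟩ := Finset.mem_image.1 hx'
    exact hsepfam p hp q hq (fun hh => hxx' (by rw [hh]))
  have hIle : I.card ≤ sepNum Γ Y Set.univ E ε :=
    le_sepNum (sepSet_bddAbove (by linarith) hNε)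
      ⟨WY, Set.subset_univ _, hWYcard, hWYsep⟩
  have hperg : ∀ g : Fin kk → Fin Kc, sZE ≤ (W g).card * M ^ (f * kk) := by
    intro g
    have hcard1 : (E \ Bg g).card ≤ f * kk := by
      have h1 : E \ Bg g ⊆
          Finset.univ.biUnion fun i : Fin kk => Fsp.image (· * cg g i) := by
        intro x hx
        have hxE := (Finset.mem_sdiff.1 hx).1
        have hxnB := (Finset.mem_sdiff.1 hx).2
        by_contra hxR
        exact hxnB (Finset.mem_sdiff.2 ⟨hxE, hxR⟩)
      calc (E \ Bg g).card
          ≤ (Finset.univ.biUnion fun i : Fin kk =>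
              Fsp.image (· * cg g i)).card := Finset.card_le_card h1
        _ ≤ ∑ i : Fin kk, (Fsp.image (· * cg g i)).card := Finset.card_biUnion_le
        _ ≤ ∑ _i : Fin kk, f := Finset.sum_le_sum fun i _ => Finset.card_image_le
        _ = kk * f := by
            rw [Finset.sum_const, Finset.card_univ, Fintype.card_fin, smul_eq_mul]
        _ = f * kk := mul_comm _ _
    have step1 : sZE ≤ sepNum Γ Y Z (Bg g) (κ / 8) * M ^ ((E \ Bg g)).card :=
      sepNum_le_mul (hBgsub g) (by linarith) (by linarith) (by linarith) hN₁
    have step2 : sepNum Γ Y Z (Bg g) (κ / 8) ≤ (W g).card := by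
      rw [hWcard' g]
      exact sepNum_mono_scale (by linarith) (sepSet_bddAbove (by linarith) hNε)
    calc sZE ≤ sepNum Γ Y Z (Bg g) (κ / 8) * M ^ ((E \ Bg g)).card := step1
      _ ≤ (W g).card * M ^ ((E \ Bg g)).card := Nat.mul_le_mul_right _ step2
      _ ≤ (W g).card * M ^ (f * kk) :=
          Nat.mul_le_mul_left _ (Nat.pow_le_pow_right hM1 hcard1)
  have hKck : Kc ^ kk = 2 ^ kk * M ^ (f * kk) := by
    rw [hKcdef, mul_pow, ← pow_mul]
  have hsum : Kc ^ kk * sZE ≤ I.card * M ^ (f * kk) := by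
    have h1 : ∑ _g : Fin kk → Fin Kc, sZE ≤
        ∑ g : Fin kk → Fin Kc, (W g).card * M ^ (f * kk) :=
      Finset.sum_le_sum fun g _ => hperg g
    have h2 : ∑ _g : Fin kk → Fin Kc, sZE = Kc ^ kk * sZE := by
      rw [Finset.sum_const, Finset.card_univ, Fintype.card_fun, Fintype.card_fin,
        Fintype.card_fin, smul_eq_mul]
    have h3 : ∑ g : Fin kk → Fin Kc, (W g).card * M ^ (f * kk) =
        (∑ g : Fin kk → Fin Kc, (W g).card) * M ^ (f * kk) :=
      (Finset.sum_mul _ _ _).symm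
    have h4 : I.card = ∑ g : Fin kk → Fin Kc, (W g).card := by
      rw [hIdef, Finset.card_sigma]
    rw [← h2, h4, ← h3]
    exact h1
  have hfinal : (2 ^ kk * sZE) * M ^ (f * kk) ≤
      sepNum Γ Y Set.univ E ε * M ^ (f * kk) := by
    calc (2 ^ kk * sZE) * M ^ (f * kk) = Kc ^ kk * sZE := by rw [hKck]; ring
      _ ≤ I.card * M ^ (f * kk) := hsum
      _ ≤ sepNum Γ Y Set.univ E ε * M ^ (f * kk) := Nat.mul_le_mul_right _ hIle
  exact Nat.le_of_mul_le_mul_right hfinal (Nat.pow_pos (by omega))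

end AuxGOE5
open Metric Filter GOE

set_option maxHeartbeats 2000000 in
/-- for expansive actions with weak specification, proper closed
invariant subsets have strictly smaller entropy. -/
theorem entropy_proper_subsystem_lt {Γ Y : Type*} [Group Γ] [Countable Γ]
    [MetricSpace Y] [CompactSpace Y] [MulAction Γ Y]
    (hact : ContAction Γ Y)
    (F : ℕ → Finset Γ) (hF : IsFolner Γ F)
    (hexp : Expansive Γ Y) (hws : WeakSpec Γ Y)
    (Z : Set Y) (hZne : Z.Nonempty) (hZcl : IsClosed Z)
    (hZinv : ∀ (s : Γ), ∀ z ∈ Z, s • z ∈ Z) (hZproper : Z ≠ Set.univ) :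
    topEntOn Γ Y Z F < topEntOn Γ Y Set.univ F := by
  classical
  obtain ⟨z0, hz0⟩ := hZne
  have hZne : Z.Nonempty := ⟨z0, hz0⟩
  have hYne : Nonempty Y := ⟨z0⟩
  obtain ⟨y, hyZ⟩ : ∃ y : Y, y ∉ Z := by
    by_contra h
    push_neg at h
    exact hZproper (Set.eq_univ_of_forall h)
  obtain ⟨κ, hκ, hexp2⟩ := hexp
  have hcardpos : ∀ n, 0 < ((F n).card : ℝ) := fun n => by
    exact_mod_cast Finset.card_pos.2 (hF.1 n)
  rcases finite_or_infinite Γ with hfin | hinf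
  · -- ============ FINITE GROUP CASE ============
    letI := Fintype.ofFinite Γ
    have hsing : ∀ x : Y, IsOpen ({x} : Set Y) := by
      intro x
      have hxeq : ({x} : Set Y) =
          ⋂ s ∈ (Finset.univ : Finset Γ), (fun z : Y => s • z) ⁻¹' (ball (s • x) κ) := by
        ext z
        simp only [Set.mem_singleton_iff, Set.mem_iInter, Set.mem_preimage, Metric.mem_ball]
        constructor
        · rintro rfl s _
          simpa using hκ
        · intro h
          by_contra hne
          obtain ⟨s, hs⟩ := hexp2 z x hne
          have := h s (Finset.mem_univ s)
          linarith
      rw [hxeq]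
      exact isOpen_biInter_finset fun s _ =>
        (isOpen_ball).preimage (hact s)
    haveI : DiscreteTopology Y := discreteTopology_iff_forall_isOpen.2 (fun U => by
      have hU : U = ⋃ x ∈ U, ({x} : Set Y) := by simp
      rw [hU]
      exact isOpen_biUnion fun x _ => hsing x)
    haveI : Finite Y := finite_of_compact_of_discrete
    letI := Fintype.ofFinite Y
    have hcard_le : ∀ n, (F n).card ≤ Fintype.card Γ := fun n => Finset.card_le_univ _
    have hVne : ({c : ℕ | ∃ᶠ n in atTop, (F n).card = c}).Nonempty := by
      by_contra hcon
      rw [Set.not_nonempty_iff_eq_empty] at hcon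
      have hev : ∀ᶠ n in atTop, ∀ c ∈ Finset.range (Fintype.card Γ + 1),
          (F n).card ≠ c := by
        rw [Filter.eventually_all_finset]
        intro c _
        have hc : c ∉ {c : ℕ | ∃ᶠ n in atTop, (F n).card = c} := by rw [hcon]; simp
        rw [Set.mem_setOf_eq, Filter.not_frequently] at hc
        exact hc
      obtain ⟨n, hn⟩ := hev.exists
      exact hn _ (Finset.mem_range.2 (Nat.lt_succ_of_le (hcard_le n))) rfl
    set q := sInf {c : ℕ | ∃ᶠ n in atTop, (F n).card = c} with hqdef
    have hqmem : ∃ᶠ n in atTop, (F n).card = q := Nat.sInf_mem hVne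
    have hq1 : 1 ≤ q := by
      obtain ⟨n, hn⟩ := hqmem.exists
      have := Finset.card_pos.2 (hF.1 n)
      omega
    have hq0 : (0 : ℝ) < (q : ℝ) := by exact_mod_cast hq1
    have hqev : ∀ᶠ n in atTop, q ≤ (F n).card := by
      have h2 : ∀ᶠ n in atTop, ∀ c ∈ Finset.range q, (F n).card ≠ c := by
        rw [Filter.eventually_all_finset]
        intro c hc
        have hclt : c < q := Finset.mem_range.1 hc
        have hcmem : c ∉ {c : ℕ | ∃ᶠ n in atTop, (F n).card = c} := fun hmem =>
          absurd (Nat.sInf_le hmem) (by omega)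
        rw [Set.mem_setOf_eq, Filter.not_frequently] at hcmem
        exact hcmem
      refine h2.mono fun n hn => ?_
      by_contra hlt
      push_neg at hlt
      exact hn _ (Finset.mem_range.2 hlt) rfl
    have hZfin : Z.Finite := Z.toFinite
    set Zf := hZfin.toFinset with hZfdef
    have hZfsub : ∀ z, z ∈ Zf ↔ z ∈ Z := fun z => hZfin.mem_toFinset
    have hZf1 : 1 ≤ Zf.card := Finset.card_pos.2 ⟨z0, (hZfsub z0).2 hz0⟩
    have hZflt : Zf.card < Fintype.card Y := by
      rw [← Finset.card_univ]
      refine Finset.card_lt_card ?_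
      rw [Finset.ssubset_univ_iff]
      intro heq
      exact hyZ ((hZfsub y).1 (heq ▸ Finset.mem_univ y))
    -- upper bound for Z
    have hupZ : topEntOn Γ Y Z F ≤ ((Real.log Zf.card / q : ℝ) : EReal) := by
      rw [GOE.topEntOn]
      refine iSup_le fun U => iSup_le fun hU => ?_
      obtain ⟨hUopen, hUcov⟩ := hU
      obtain ⟨u0, hu0, -⟩ := hUcov hz0
      have hVch : ∀ z : Y, ∀ s : Γ, ∃ V, V ∈ U ∧ (z ∈ Z → s • z ∈ V) := by
        intro z s
        by_cases hz : z ∈ Z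
        · obtain ⟨V, hV, hm⟩ := hUcov (hZinv s z hz)
          exact ⟨V, hV, fun _ => hm⟩
        · exact ⟨u0, hu0, fun h => absurd h hz⟩
      choose Vf hVfU hVfm using hVch
      have hcovle : ∀ n, covNumOn Γ Y Z U (F n) ≤ Zf.card := by
        intro n
        have hmem : (Zf.image (fun z => fun s : Γ => Vf z s)).card ∈ covSet Γ Y Z U (F n) := by
          refine ⟨_, rfl, ?_, ?_⟩
          · intro g hg s
            obtain ⟨z, -, rfl⟩ := Finset.mem_image.1 hg
            exact hVfU z s
          · intro z hz
            refine Set.mem_biUnion (Finset.mem_image_of_mem _ ((hZfsub z).2 hz)) ?_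
            exact Set.mem_iInter₂.2 fun s _ => hVfm z s hz
        exact le_trans (Nat.sInf_le hmem) Finset.card_image_le
      refine ereal_limsup_le ?_
      filter_upwards [hqev] with n hn
      have hlogle : Real.log (covNumOn Γ Y Z U (F n)) ≤ Real.log Zf.card :=
        logNat_mono (hcovle n)
      have hlog0 : 0 ≤ Real.log Zf.card := Real.log_nonneg (by exact_mod_cast hZf1)
      have hc0 : (q : ℝ) ≤ ((F n).card : ℝ) := by exact_mod_cast hn
      calc Real.log (covNumOn Γ Y Z U (F n)) / (F n).card
          ≤ Real.log Zf.card / (F n).card :=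
            div_le_div_of_nonneg_right hlogle (hcardpos n).le
        _ ≤ Real.log Zf.card / q := by
            apply div_le_div_of_nonneg_left hlog0 hq0 hc0
    -- lower bound for univ
    have hlowY : ((Real.log (Fintype.card Y) / q : ℝ) : EReal) ≤
        topEntOn Γ Y Set.univ F := by
      set Uf : Finset (Set Y) := Finset.univ.image (fun a : Y => ({a} : Set Y)) with hUfdef
      have hUfprop : (∀ V ∈ Uf, IsOpen V) ∧ Set.univ ⊆ ⋃₀ (↑Uf : Set (Set Y)) := by
        constructor
        · intro V hV
          obtain ⟨a, -, rfl⟩ := Finset.mem_image.1 hV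
          exact hsing a
        · intro p _
          exact ⟨{p}, Finset.mem_coe.2 (Finset.mem_image_of_mem _ (Finset.mem_univ p)), rfl⟩
      have hgelb : ∀ n, Fintype.card Y ≤ covNumOn Γ Y Set.univ Uf (F n) := by
        intro n
        have hmem : ((Finset.univ : Finset Y).image
            (fun p => fun s : Γ => ({s • p} : Set Y))).card ∈ covSet Γ Y Set.univ Uf (F n) := by
          refine ⟨_, rfl, ?_, ?_⟩
          · intro g hg s
            obtain ⟨p, -, rfl⟩ := Finset.mem_image.1 hg
            exact Finset.mem_image_of_mem _ (Finset.mem_univ (s • p))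
          · intro z _
            refine Set.mem_biUnion (Finset.mem_image_of_mem _ (Finset.mem_univ z)) ?_
            exact Set.mem_iInter₂.2 fun s _ => rfl
        refine le_csInf ⟨_, hmem⟩ ?_
        rintro b ⟨c, rfl, hcU, hccov⟩
        obtain ⟨s0, hs0⟩ := hF.1 n
        have hch : ∀ p : Y, ∃ fc, fc ∈ c ∧
            p ∈ ⋂ s ∈ F n, (fun x : Y => s • x) ⁻¹' fc s := by
          intro p
          have := hccov (Set.mem_univ p)
          simpa [Set.mem_iUnion] using this
        choose fc hfcc hfcm using hch
        have hinj : ∀ p ∈ (Finset.univ : Finset Y), ∀ p' ∈ (Finset.univ : Finset Y),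
            fc p = fc p' → p = p' := by
          intro p _ p' _ heq
          obtain ⟨a, -, ha⟩ := Finset.mem_image.1 (hcU (fc p) (hfcc p) s0)
          have m1 : s0 • p ∈ fc p s0 := Set.mem_iInter₂.1 (hfcm p) s0 hs0
          have m2 : s0 • p' ∈ fc p' s0 := Set.mem_iInter₂.1 (hfcm p') s0 hs0
          rw [← heq] at m2
          rw [← ha] at m1 m2
          have e1 : s0 • p = a := m1
          have e2 : s0 • p' = a := m2
          exact MulAction.injective s0 (e1.trans e2.symm)
        have hle : (Finset.univ : Finset Y).card ≤ c.card :=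
          Finset.card_le_card_of_injOn (fun p => fc p) (fun p _ => hfcc p) hinj
        rw [Finset.card_univ] at hle
        exact hle
      refine le_trans ?_ (le_iSup_of_le Uf (le_iSup_of_le hUfprop le_rfl))
      refine ereal_le_limsup ?_
      refine hqmem.mono fun n hn => ?_
      have hloglb : Real.log (Fintype.card Y) ≤
          Real.log (covNumOn Γ Y Set.univ Uf (F n)) := logNat_mono (hgelb n)
      calc Real.log (Fintype.card Y) / (q : ℝ)
          = Real.log (Fintype.card Y) / ((F n).card : ℝ) := by rw [hn]
        _ ≤ Real.log (covNumOn Γ Y Set.univ Uf (F n)) / (F n).card :=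
            div_le_div_of_nonneg_right hloglb (hcardpos n).le
    have hstrict : ((Real.log Zf.card / q : ℝ) : EReal) <
        ((Real.log (Fintype.card Y) / q : ℝ) : EReal) := by
      refine EReal.coe_lt_coe_iff.2 ?_
      have hlt : Real.log Zf.card < Real.log (Fintype.card Y) :=
        Real.log_lt_log (by exact_mod_cast hZf1) (by exact_mod_cast hZflt)
      exact div_lt_div_of_pos_right hlt hq0
    exact lt_of_le_of_lt hupZ (lt_of_lt_of_le hstrict hlowY)
  · -- ============ INFINITE GROUP CASE ============
    have hε1 : 0 < Metric.infDist y Z := (hZcl.notMem_iff_infDist_pos hZne).1 hyZ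
    set ε1 := Metric.infDist y Z with hε1def
    set ε : ℝ := min (ε1 / 3) (κ / 32) with hεdef
    have hε : 0 < ε := lt_min (by linarith) (by linarith)
    have hε3 : 3 * ε ≤ ε1 := by
      have := min_le_left (ε1 / 3) (κ / 32); linarith
    have hε32 : ε ≤ κ / 32 := min_le_right _ _
    have hyd : ∀ z ∈ Z, 3 * ε ≤ dist y z := fun z hz =>
      le_trans hε3 (Metric.infDist_le_dist_of_mem hz)
    obtain ⟨Fsp, hFspne, hFspsym, hspec⟩ := hws ε hε
    set f := Fsp.card with hfdef
    obtain ⟨N₁, hN₁⟩ := exists_net (Y := Y) (show (0 : ℝ) < κ / 32 by linarith)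
    set M := N₁.card with hMdef
    have hM1 : 1 ≤ M := by
      obtain ⟨q, hq, -⟩ := hN₁ y
      exact Finset.card_pos.2 ⟨q, hq⟩
    obtain ⟨Nε, hNε⟩ := exists_net (Y := Y) (show (0 : ℝ) < ε / 3 by linarith)
    set Kc : ℕ := 2 * M ^ f with hKcdef
    have hKcpos : 0 < Kc := by positivity
    set sZ : ℕ → ℕ := fun n => sepNum Γ Y Z (F n) (κ / 4) with hsZdef
    have bddsZ : ∀ E : Finset Γ, BddAbove (sepSet Γ Y Z E (κ / 4)) := fun E =>
      sepSet_bddAbove (by linarith) hN₁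
    have h1sZ : ∀ n, 1 ≤ sZ n := fun n => one_le_sepNum hZne (bddsZ (F n))
    set u : ℕ → ℝ := fun n => Real.log (sZ n) / (F n).card with hudef
    have hu0 : ∀ n, 0 ≤ u n := fun n =>
      div_nonneg (Real.log_nonneg (by exact_mod_cast h1sZ n)) (le_of_lt (hcardpos n))
    set τ : ℝ := limsup u atTop with hτdef
    have hcobddU : IsCoboundedUnder (· ≤ ·) atTop u :=
      isCoboundedUnder_le_of_le atTop hu0
    -- Part I
    have hupper : topEntOn Γ Y Z F ≤ (τ : EReal) :=
      entUpper hact F hF hκ hexp2 Z hZne hZcl hZinv hN₁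
    -- packing
    have hCn : ∀ n, ∃ C, C ⊆ F n ∧
        (∀ c ∈ C, ∀ c' ∈ C, c ≠ c' → ∀ p ∈ Fsp, p * c ≠ c') ∧
        (F n).card ≤ C.card * (f + 1) := fun n => exists_packing Fsp hFspsym (F n)
    choose Cn hCnsub hCnpair hCncard using hCn
    set m : ℕ → ℕ := fun n => (Cn n).card with hmdef
    set k : ℕ → ℕ := fun n => m n / Kc with hkdef
    set sY : ℕ → ℕ := fun n => sepNum Γ Y Set.univ (F n) ε with hsYdef
    -- Claim A
    have hclaimA : ∀ n, 2 ^ (k n) * sZ n ≤ sY n := by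
      intro n
      refine claimA Z hZne hZinv y hε hε32 hyd hFspsym hspec hN₁ hNε (hCnsub n)
        (hCnpair n) (k n) ?_
      exact Nat.div_mul_le_self _ _
    -- Part III
    set Q : ℕ := 2 * Kc * (f + 1) with hQdef
    have hQpos : 0 < Q := by positivity
    have hkbig : ∀ᶠ n in atTop, (F n).card ≤ k n * Q := by
      have hcard_to := folner_card_tendsto (Γ := Γ) hF
      filter_upwards [hcard_to.eventually_ge_atTop (2 * Kc * (f + 1))] with n hn
      have hm2K : 2 * Kc ≤ m n := by
        by_contra hcon
        push_neg at hcon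
        have h8 := hCncard n
        nlinarith
      have hk1 : 1 ≤ k n := by
        have : Kc ≤ m n := by omega
        exact (Nat.one_le_div_iff hKcpos).2 this
      have hmlt : m n < (k n + 1) * Kc :=
        (Nat.div_lt_iff_lt_mul hKcpos).1 (Nat.lt_succ_self _)
      have hm2k : m n ≤ 2 * (k n) * Kc := by nlinarith
      calc (F n).card ≤ m n * (f + 1) := hCncard n
        _ ≤ 2 * (k n) * Kc * (f + 1) := Nat.mul_le_mul_right _ hm2k
        _ = k n * Q := by rw [hQdef]; ring
    set θ : ℝ := Real.log 2 / Q with hθdef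
    have hlog2pos : (0 : ℝ) < Real.log 2 := Real.log_pos (by norm_num)
    have hθpos : 0 < θ := div_pos hlog2pos (by exact_mod_cast hQpos)
    obtain ⟨N₂, hN₂⟩ := exists_net (Y := Y) (show (0 : ℝ) < ε / 6 by linarith)
    set Uε : Finset (Set Y) := N₂.image (fun q => ball q (ε / 3)) with hUεdef
    have hUεprop : (∀ V ∈ Uε, IsOpen V) ∧ Set.univ ⊆ ⋃₀ (↑Uε : Set (Set Y)) := by
      constructor
      · intro V hV
        obtain ⟨q, -, rfl⟩ := Finset.mem_image.1 hV
        exact isOpen_ball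
      · intro p _
        obtain ⟨q, hq, hd⟩ := hN₂ p
        exact ⟨ball q (ε / 3), Finset.mem_coe.2 (Finset.mem_image_of_mem _ hq),
          by simp only [Metric.mem_ball]; linarith⟩
    have hUεLeb : ∀ z ∈ (Set.univ : Set Y), ∃ V ∈ Uε, ball z (ε / 6) ⊆ V := by
      intro z _
      obtain ⟨q, hq, hd⟩ := hN₂ z
      refine ⟨ball q (ε / 3), Finset.mem_image_of_mem _ hq, ?_⟩
      intro p hp
      simp only [Metric.mem_ball] at hp ⊢
      calc dist p q ≤ dist p z + dist z q := dist_triangle _ _ _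
        _ < ε / 6 + ε / 6 := add_lt_add hp hd
        _ ≤ ε / 3 := by linarith
    obtain ⟨N₃, hN₃⟩ := exists_net (Y := Y) (show (0 : ℝ) < ε / 24 by linarith)
    have huniv_inv : ∀ s : Γ, ∀ z ∈ (Set.univ : Set Y), s • z ∈ (Set.univ : Set Y) :=
      fun _ _ _ => Set.mem_univ _
    have hcovset_ne : ∀ n, (covSet Γ Y Set.univ Uε (F n)).Nonempty := fun n =>
      (covNum_le_sepNum (Set.univ_nonempty) huniv_inv (show (0 : ℝ) < ε / 6 by linarith)
        hUεLeb (sepSet_bddAbove (show 2 * (ε / 24) < ε / 6 by linarith) hN₃)).2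
    have hdiam : ∀ V ∈ Uε, ∀ x ∈ V, ∀ x' ∈ V, dist x x' < ε := by
      intro V hV x hx x' hx'
      obtain ⟨q, -, rfl⟩ := Finset.mem_image.1 hV
      simp only [Metric.mem_ball] at hx hx'
      calc dist x x' ≤ dist x q + dist x' q := dist_triangle_right _ _ _
        _ < ε / 3 + ε / 3 := add_lt_add hx hx'
        _ < ε := by linarith
    have hcovlb : ∀ n, sY n ≤ covNumOn Γ Y Set.univ Uε (F n) := fun n =>
      sepNum_le_covNum (hF.1 n) hdiam (hcovset_ne n)
    have hlow1 : Filter.limsup (fun n =>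
        ((Real.log (covNumOn Γ Y Set.univ Uε (F n)) / (F n).card : ℝ) : EReal)) atTop ≤
        topEntOn Γ Y Set.univ F := by
      rw [GOE.topEntOn]
      exact le_iSup_of_le Uε (le_iSup_of_le hUεprop le_rfl)
    have hlower : ((τ + θ : ℝ) : EReal) ≤ topEntOn Γ Y Set.univ F := by
      refine ereal_le_of_forall_sub fun γ hγ => ?_
      refine le_trans ?_ hlow1
      refine ereal_le_limsup ?_
      have hfreq : ∃ᶠ n in atTop, τ - γ < u n :=
        frequently_lt_of_lt_limsup hcobddU (by linarith)
      have hev : ∀ᶠ n in atTop, u n + θ ≤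
          Real.log (covNumOn Γ Y Set.univ Uε (F n)) / (F n).card := by
        filter_upwards [hkbig] with n hn
        have hlog1 : Real.log ((2 ^ (k n) * sZ n : ℕ) : ℝ) ≤
            Real.log (covNumOn Γ Y Set.univ Uε (F n)) :=
          logNat_mono (le_trans (hclaimA n) (hcovlb n))
        have hlog2 : Real.log ((2 ^ (k n) * sZ n : ℕ) : ℝ) =
            (k n : ℝ) * Real.log 2 + Real.log (sZ n) := by
          push_cast
          rw [Real.log_mul (by positivity)
            (by exact_mod_cast Nat.one_le_iff_ne_zero.1 (h1sZ n)), Real.log_pow]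
        have hcQ : ((F n).card : ℝ) ≤ (k n : ℝ) * Q := by exact_mod_cast hn
        have hθk : θ * (F n).card ≤ (k n : ℝ) * Real.log 2 := by
          rw [hθdef, div_mul_eq_mul_div, div_le_iff₀ (by exact_mod_cast hQpos)]
          calc Real.log 2 * (F n).card ≤ Real.log 2 * ((k n : ℝ) * Q) := by nlinarith
            _ = (k n : ℝ) * Real.log 2 * Q := by ring
        have hun : u n = Real.log (sZ n) / (F n).card := rfl
        rw [hun, div_add' _ _ _ (hcardpos n).ne', div_le_div_iff₀ (hcardpos n) (hcardpos n)]
        calc (Real.log (sZ n) + θ * (F n).card) * (F n).card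
            ≤ (Real.log (sZ n) + (k n : ℝ) * Real.log 2) * (F n).card := by nlinarith
          _ = Real.log ((2 ^ (k n) * sZ n : ℕ) : ℝ) * (F n).card := by rw [hlog2]; ring
          _ ≤ Real.log (covNumOn Γ Y Set.univ Uε (F n)) * (F n).card := by nlinarith
      refine (hfreq.and_eventually hev).mono ?_
      rintro n ⟨h1, h2⟩
      linarith
    have hstrict : (τ : EReal) < ((τ + θ : ℝ) : EReal) := EReal.coe_lt_coe_iff.2 (by linarith)
    exact lt_of_le_of_lt hupper (lt_of_lt_of_le hstrict hlower)
end

section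
/- Let Γ be a countable amenable group. Let Γ ↷ X be an expansive action with the weak specification property on a compact metrizable space X, and let Γ ↷ Y be an expansive factor of Γ ↷ X with factor map T: X → Y, such that h_top(Y) < h_top(X). Then for every homoclinic equivalence class Ξ of X, the map T fails to be injective on Ξ. -/
open Filter Topology MeasureTheory
open scoped symmDiff

open GOE

/-!
Since `h(Y) < h(X)`, there are an open cover `U` of `X`, a fine open cover of `Y` and a window
`B = F n` such that refining `U` along `B` needs more sets than refining the cover of `Y`. The
points of a maximal `B`-separated set of `X` are glued, by weak specification, to `z` outside the
neighbourhood `B ∪ Fs * B` of `B`: expansiveness of `X` makes the glued points homoclinic to `z`,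
and separation keeps them distinct. By pigeonhole two of them have images in the same cell of an
optimal refinement of the cover of `Y`; then their images stay close under every group element,
and expansiveness of `Y` identifies them.
-/

open Set
open scoped Pointwise

namespace GOE

lemma log_natCast_le_log_natCast {m n : ℕ} (h : m ≤ n) : Real.log m ≤ Real.log n := by
  rcases m.eq_zero_or_pos with rfl | hm
  · simpa using Real.log_natCast_nonneg n
  · exact Real.log_le_log (by exact_mod_cast hm) (by exact_mod_cast h)

lemma exists_lt_of_limsup_lt {a b c : ℕ → ℕ}
    (h : limsup (fun n => ((Real.log (a n) / c n : ℝ) : EReal)) atTop <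
      limsup (fun n => ((Real.log (b n) / c n : ℝ) : EReal)) atTop) :
    ∃ n, a n < b n := by
  by_contra! hba
  refine h.not_ge (limsup_le_limsup (Eventually.of_forall fun n => ?_))
  exact EReal.coe_le_coe_iff.2 <|
    div_le_div_of_nonneg_right (log_natCast_le_log_natCast (hba n)) (Nat.cast_nonneg _)

section Covers

variable {Γ X : Type*} [Group Γ] [MetricSpace X] [MulAction Γ X]

def IsFiniteOpenCover (U : Finset (Set X)) : Prop :=
  (∀ V ∈ U, IsOpen V) ∧ univ ⊆ ⋃₀ (↑U : Set (Set X))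

/-- `covNumOn Γ X univ U E` is the least cardinality of an `IsJoinCover U E`. -/
def IsJoinCover (U : Finset (Set X)) (E : Finset Γ) (c : Finset (Γ → Set X)) : Prop :=
  (∀ f ∈ c, ∀ s : Γ, f s ∈ U) ∧ univ ⊆ ⋃ f ∈ c, ⋂ s ∈ E, (fun x : X => s • x) ⁻¹' f s

def IsSpanning (E : Finset Γ) (δ : ℝ) (W : Finset X) : Prop :=
  ∀ x : X, ∃ w ∈ W, ∀ s ∈ E, dist (s • x) (s • w) < δ

def IsSeparated (E : Finset Γ) (δ : ℝ) (W : Finset X) : Prop :=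
  ∀ x ∈ W, ∀ y ∈ W, x ≠ y → ∃ s ∈ E, δ ≤ dist (s • x) (s • y)

lemma IsSeparated.insert {E : Finset Γ} {l : ℝ} {W : Finset X} [DecidableEq X]
    (hW : IsSeparated E l W) {x : X} (hx : ∀ w ∈ W, ∃ s ∈ E, l ≤ dist (s • x) (s • w)) :
    IsSeparated E l (insert x W) := by
  intro a ha b hb hab
  rcases Finset.mem_insert.1 ha with rfl | ha' <;> rcases Finset.mem_insert.1 hb with rfl | hb'
  · exact absurd rfl hab
  · exact hx b hb'
  · simpa only [dist_comm] using hx a ha'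
  · exact hW a ha' b hb' hab

lemma limsup_le_topEntOn {U : Finset (Set X)} (hU : IsFiniteOpenCover U) (F : ℕ → Finset Γ) :
    limsup (fun n => ((Real.log (covNumOn Γ X univ U (F n)) / (F n).card : ℝ) : EReal)) atTop ≤
      topEntOn Γ X univ F :=
  le_iSup₂ (f := fun U (_ : IsFiniteOpenCover U) =>
    limsup (fun n => ((Real.log (covNumOn Γ X univ U (F n)) / (F n).card : ℝ) : EReal)) atTop)
    U hU

lemma exists_lt_limsup_of_lt_topEntOn {F : ℕ → Finset Γ} {a : EReal}
    (h : a < topEntOn Γ X univ F) : ∃ U : Finset (Set X), IsFiniteOpenCover U ∧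
      a < limsup (fun n => ((Real.log (covNumOn Γ X univ U (F n)) / (F n).card : ℝ) : EReal))
        atTop := by
  simpa only [topEntOn, lt_iSup_iff, exists_prop, IsFiniteOpenCover] using h

lemma covNumOn_le_card {U : Finset (Set X)} {E : Finset Γ} {c : Finset (Γ → Set X)}
    (hc : IsJoinCover U E c) : covNumOn Γ X univ U E ≤ c.card :=
  Nat.sInf_le ⟨c, rfl, hc⟩

lemma IsSpanning.exists_isJoinCover {U : Finset (Set X)} {l : ℝ}
    (hU : ∀ p : X, ∃ V ∈ U, Metric.ball p l ⊆ V) {E : Finset Γ} {W : Finset X}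
    (hW : IsSpanning E l W) : ∃ c, IsJoinCover U E c ∧ c.card ≤ W.card := by
  classical
  choose V hVU hV using hU
  refine ⟨W.image fun w s => V (s • w), ⟨?_, fun x _ => ?_⟩, Finset.card_image_le⟩
  · rintro _ hf s
    obtain ⟨w, -, rfl⟩ := Finset.mem_image.1 hf
    exact hVU _
  · obtain ⟨w, hw, hxw⟩ := hW x
    refine mem_biUnion (Finset.mem_coe.2 (Finset.mem_image_of_mem _ hw)) ?_
    exact mem_iInter₂.2 fun s hs => hV _ (Metric.mem_ball.2 (hxw s hs))

lemma exists_isFiniteOpenCover_forall_dist_lt [CompactSpace X] {δ : ℝ} (hδ : 0 < δ) :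
    ∃ U : Finset (Set X), IsFiniteOpenCover U ∧ ∀ V ∈ U, ∀ a ∈ V, ∀ b ∈ V, dist a b < δ := by
  classical
  obtain ⟨t, -, ht, hcov⟩ := finite_cover_balls_of_compact (isCompact_univ (X := X)) (half_pos hδ)
  refine ⟨ht.toFinset.image fun y => Metric.ball y (δ / 2), ⟨?_, fun x hx => ?_⟩, ?_⟩
  · intro V hV
    obtain ⟨y, -, rfl⟩ := Finset.mem_image.1 hV
    exact Metric.isOpen_ball
  · obtain ⟨y, hy, hxy⟩ := mem_iUnion₂.1 (hcov hx)
    exact ⟨_, Finset.mem_image_of_mem _ (ht.mem_toFinset.2 hy), hxy⟩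
  · intro V hV a ha b hb
    obtain ⟨y, -, rfl⟩ := Finset.mem_image.1 hV
    calc dist a b ≤ dist a y + dist b y := dist_triangle_right a b y
      _ < δ / 2 + δ / 2 := add_lt_add ha hb
      _ = δ := add_halves δ

end Covers

section Dynamics

variable {Γ X : Type*} [Group Γ] [MetricSpace X] [CompactSpace X] [MulAction Γ X]

lemma exists_forall_dist_smul_lt (hact : ContAction Γ X) (E : Finset Γ) {δ : ℝ} (hδ : 0 < δ) :
    ∃ δ' > 0, ∀ x y : X, dist x y < δ' → ∀ s ∈ E, dist (s • x) (s • y) < δ := by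
  have huc : UniformContinuous fun x : X => fun s : E => (s : Γ) • x :=
    CompactSpace.uniformContinuous_of_continuous (continuous_pi fun s => hact s)
  obtain ⟨δ', hδ', h⟩ := Metric.uniformContinuous_iff.1 huc δ hδ
  exact ⟨δ', hδ', fun x y hxy s hs => (dist_le_pi_dist _ _ ⟨s, hs⟩).trans_lt (h hxy)⟩

lemma exists_card_le_of_isSeparated (hact : ContAction Γ X) (E : Finset Γ) {l : ℝ}
    (hl : 0 < l) : ∃ N : ℕ, ∀ W : Finset X, IsSeparated E l W → W.card ≤ N := by
  classical
  obtain ⟨δ, hδ, hE⟩ := exists_forall_dist_smul_lt hact E hl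
  obtain ⟨t, -, ht, hcov⟩ := finite_cover_balls_of_compact (isCompact_univ (X := X)) (half_pos hδ)
  choose c hct hc using fun x : X => mem_iUnion₂.1 (hcov (mem_univ x))
  refine ⟨ht.toFinset.card, fun W hW => Finset.card_le_card_of_injOn c
    (fun x _ => ht.mem_toFinset.2 (hct x)) fun x hx y hy hxy => ?_⟩
  by_contra hne
  obtain ⟨s, hs, hsep⟩ := hW x hx y hy hne
  have hx' := Metric.mem_ball.1 (hc x)
  have hy' := Metric.mem_ball.1 (hc y)
  rw [hxy] at hx'
  have hxy' : dist x y < δ := by linarith [dist_triangle_right x y (c y)]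
  linarith [hE x y hxy' s hs]

/-- A separated set of maximal size is spanning. -/
lemma exists_isSeparated_isSpanning (hact : ContAction Γ X) (E : Finset Γ) {l : ℝ}
    (hl : 0 < l) : ∃ W : Finset X, IsSeparated E l W ∧ IsSpanning E l W := by
  classical
  obtain ⟨N, hN⟩ := exists_card_le_of_isSeparated hact E hl
  by_contra! hW
  have hgrow : ∀ n : ℕ, ∃ W : Finset X, IsSeparated E l W ∧ W.card = n := by
    intro n
    induction n with
    | zero => exact ⟨∅, by simp [IsSeparated], rfl⟩
    | succ n ih =>
      obtain ⟨W, hsep, rfl⟩ := ih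
      obtain ⟨x, hx⟩ : ∃ x : X, ∀ w ∈ W, ∃ s ∈ E, l ≤ dist (s • x) (s • w) := by
        simpa [IsSpanning] using hW W hsep
      have hxW : x ∉ W := fun hxW => by
        obtain ⟨s, -, hs⟩ := hx x hxW
        linarith [dist_self (s • x)]
      exact ⟨_, hsep.insert hx, Finset.card_insert_of_notMem hxW⟩
  obtain ⟨W, hsep, hcard⟩ := hgrow (N + 1)
  linarith [hN W hsep]

lemma IsFiniteOpenCover.exists_pos_covNumOn_le {U : Finset (Set X)} (hU : IsFiniteOpenCover U) :
    ∃ l > 0, ∀ (E : Finset Γ) (W : Finset X), IsSpanning E l W →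
      covNumOn Γ X univ U E ≤ W.card := by
  obtain ⟨l, hl, hleb⟩ := lebesgue_number_lemma_of_metric_sUnion isCompact_univ hU.1 hU.2
  refine ⟨l, hl, fun E W hW => ?_⟩
  obtain ⟨c, hc, hcard⟩ := hW.exists_isJoinCover fun p => hleb p (mem_univ p)
  exact (covNumOn_le_card hc).trans hcard

lemma IsFiniteOpenCover.exists_isJoinCover_card_eq (hact : ContAction Γ X)
    {U : Finset (Set X)} (hU : IsFiniteOpenCover U) (E : Finset Γ) :
    ∃ c, IsJoinCover U E c ∧ c.card = covNumOn Γ X univ U E := by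
  obtain ⟨l, hl, hleb⟩ := lebesgue_number_lemma_of_metric_sUnion isCompact_univ hU.1 hU.2
  obtain ⟨W, -, hW⟩ := exists_isSeparated_isSpanning hact E hl
  obtain ⟨c, hc, -⟩ := hW.exists_isJoinCover fun p => hleb p (mem_univ p)
  obtain ⟨c, hcard, hc⟩ := Nat.sInf_mem (⟨c.card, c, rfl, hc⟩ :
    {n | ∃ c : Finset (Γ → Set X), c.card = n ∧ IsJoinCover U E c}.Nonempty)
  exact ⟨c, hc, hcard⟩

lemma exists_finset_dist_lt_of_expansive (hact : ContAction Γ X) {κ : ℝ}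
    (hexp : ∀ x y : X, x ≠ y → ∃ s : Γ, κ < dist (s • x) (s • y)) {ε : ℝ} (hε : 0 < ε) :
    ∃ A : Finset Γ, ∀ x y : X, (∀ s ∈ A, dist (s • x) (s • y) ≤ κ) → dist x y < ε := by
  have hC : IsCompact {p : X × X | ε ≤ dist p.1 p.2} :=
    (isClosed_le continuous_const continuous_dist).isCompact
  have hopen (s : Γ) : IsOpen {p : X × X | κ < dist (s • p.1) (s • p.2)} :=
    isOpen_lt continuous_const
      (continuous_dist.comp (((hact s).comp continuous_fst).prodMk ((hact s).comp continuous_snd)))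
  have hcov : {p : X × X | ε ≤ dist p.1 p.2} ⊆
      ⋃ s : Γ, {p : X × X | κ < dist (s • p.1) (s • p.2)} := fun p hp =>
    mem_iUnion.2 (hexp p.1 p.2 fun h => by simp_all [dist_self]; linarith)
  obtain ⟨A, hA⟩ := hC.elim_finite_subcover _ hopen hcov
  refine ⟨A, fun x y h => not_le.1 fun hxy => ?_⟩
  obtain ⟨s, hs, hκ⟩ := mem_iUnion₂.1 (hA (show (x, y) ∈ _ from hxy))
  exact (h s hs).not_gt hκ

lemma homoclinic_of_forall_notMem_dist_le (hact : ContAction Γ X) {κ : ℝ}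
    (hexp : ∀ x y : X, x ≠ y → ∃ s : Γ, κ < dist (s • x) (s • y)) {x z : X} {D : Finset Γ}
    (h : ∀ s ∉ D, dist (s • x) (s • z) ≤ κ) : Homoclinic Γ x z := by
  classical
  intro ε hε
  obtain ⟨A, hA⟩ := exists_finset_dist_lt_of_expansive hact hexp hε
  refine ⟨A⁻¹ * D, fun t ht => hA _ _ fun s hs => ?_⟩
  rw [smul_smul, smul_smul]
  refine h _ fun hst => ht ?_
  simpa using Finset.mul_mem_mul (Finset.inv_mem_inv hs) hst

/-- The infinite region outside `B ∪ Fs * B` is reached from its finite subsets by compactness. -/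
lemma WeakSpec.exists_gluing [DecidableEq Γ] (hws : WeakSpec Γ X) (hact : ContAction Γ X) {ε : ℝ} (hε : 0 < ε) :
    ∃ Fs : Finset Γ, ∀ (B : Finset Γ) (w z : X), ∃ x : X,
      (∀ s ∈ B, dist (s • x) (s • w) ≤ ε) ∧ ∀ s ∉ B ∪ Fs * B, dist (s • x) (s • z) ≤ ε := by
  obtain ⟨Fs, -, hsymm, hspec⟩ := hws ε hε
  refine ⟨Fs, fun B w z => ?_⟩
  have hclosed (s : Γ) (y : X) : IsClosed {x : X | dist (s • x) (s • y) ≤ ε} :=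
    isClosed_le ((hact s).dist continuous_const) continuous_const
  have hfinite (C : Finset Γ) (hC : Disjoint C (B ∪ Fs * B)) : ∃ x : X,
      (∀ s ∈ B, dist (s • x) (s • w) ≤ ε) ∧ ∀ s ∈ C, dist (s • x) (s • z) ≤ ε := by
    have hsep : ∀ i j : Fin 2, i ≠ j → ∀ f ∈ Fs, ∀ s ∈ ![B, C] i, f * s ∉ ![B, C] j := by
      intro i j hij f hf s hs hfs
      fin_cases i <;> fin_cases j <;> simp at hij hs hfs
      · exact Finset.disjoint_left.1 hC hfs (Finset.mem_union_right _ (Finset.mul_mem_mul hf hs))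
      · refine Finset.disjoint_left.1 hC hs (Finset.mem_union_right _ ?_)
        simpa using Finset.mul_mem_mul (hsymm f hf) hfs
    obtain ⟨x, hx⟩ := hspec (Fin 2) inferInstance ![B, C] hsep ![w, z]
    exact ⟨x, hx 0, hx 1⟩
  obtain ⟨x, hxB, hxz⟩ := (isClosed_biInter fun s (_ : s ∈ B) => hclosed s w).isCompact
    |>.inter_iInter_nonempty (fun s : {s // s ∉ B ∪ Fs * B} => {x | dist (s.1 • x) (s.1 • z) ≤ ε})
      (fun s => hclosed s.1 z) fun u => by
        obtain ⟨x, hxB, hxC⟩ := hfinite (u.map (Function.Embedding.subtype _))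
          (Finset.disjoint_left.2 fun s hs => by
            obtain ⟨s, -, rfl⟩ := Finset.mem_map.1 hs
            exact s.2)
        exact ⟨x, mem_iInter₂.2 fun s hs => hxB s hs, mem_iInter₂.2 fun s hs =>
          hxC s (Finset.mem_map_of_mem _ hs)⟩
  exact ⟨x, fun s hs => mem_iInter₂.1 hxB s (Finset.mem_coe.2 hs), fun s hs => mem_iInter.1 hxz ⟨s, hs⟩⟩

end Dynamics

lemma eq_of_forall_dist_smul_lt {Γ Y : Type*} [Group Γ] [DecidableEq Γ] [MetricSpace Y]
    [MulAction Γ Y] {κ : ℝ} (hexp : ∀ y y' : Y, y ≠ y' → ∃ s : Γ, κ < dist (s • y) (s • y'))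
    {Fs B : Finset Γ} {δ : ℝ} (hδ : δ ≤ κ)
    (hFs : ∀ a b : Y, dist a b < δ → ∀ f ∈ Fs, dist (f • a) (f • b) < κ) {y y' y₀ : Y}
    (hB : ∀ t ∈ B, dist (t • y) (t • y') < δ)
    (hy : ∀ s ∉ B ∪ Fs * B, dist (s • y) (s • y₀) < κ / 2)
    (hy' : ∀ s ∉ B ∪ Fs * B, dist (s • y') (s • y₀) < κ / 2) : y = y' := by
  by_contra hne
  obtain ⟨τ, hτ⟩ := hexp y y' hne
  refine hτ.not_ge ?_
  by_cases hτB : τ ∈ B ∪ Fs * B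
  · rcases Finset.mem_union.1 hτB with hτ | hτ
    · exact (hB τ hτ).le.trans hδ
    · obtain ⟨f, hf, t, ht, rfl⟩ := Finset.mem_mul.1 hτ
      rw [mul_smul, mul_smul]
      exact (hFs _ _ (hB t ht) f hf).le
  · linarith [dist_triangle_right (τ • y) (τ • y') (τ • y₀), hy τ hτB, hy' τ hτB]

section Factor

variable {Γ X Y : Type*} [Group Γ] [DecidableEq Γ] [MetricSpace X] [CompactSpace X]
  [MulAction Γ X] [MetricSpace Y] [CompactSpace Y] [MulAction Γ Y]

lemma exists_covNumOn_le_card_homoclinic (hact : ContAction Γ X) (hexp : Expansive Γ X)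
    (hws : WeakSpec Γ X) {U : Finset (Set X)} (hU : IsFiniteOpenCover U) (z : X) {η : ℝ}
    (hη : 0 < η) : ∃ Fs : Finset Γ, ∀ B : Finset Γ, ∃ P : Finset X,
      covNumOn Γ X univ U B ≤ P.card ∧
        ∀ x ∈ P, Homoclinic Γ x z ∧ ∀ s ∉ B ∪ Fs * B, dist (s • x) (s • z) ≤ η := by
  classical
  obtain ⟨κ, hκ, hexp⟩ := hexp
  obtain ⟨l, hl, hcov⟩ := hU.exists_pos_covNumOn_le (Γ := Γ)
  set ε := min (l / 3) (min κ η)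
  have hε : 0 < ε := lt_min (by positivity) (lt_min hκ hη)
  have hεl : ε ≤ l / 3 := min_le_left _ _
  have hεκ : ε ≤ κ := (min_le_right _ _).trans (min_le_left _ _)
  have hεη : ε ≤ η := (min_le_right _ _).trans (min_le_right _ _)
  obtain ⟨Fs, hglue⟩ := hws.exists_gluing hact hε
  refine ⟨Fs, fun B => ?_⟩
  obtain ⟨W, hWsep, hWspan⟩ := exists_isSeparated_isSpanning hact B hl
  choose x hxw hxz using fun w => hglue B w z
  have hinj : Set.InjOn x W := fun w₁ hw₁ w₂ hw₂ hx => by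
    by_contra hne
    obtain ⟨s, hs, hsep⟩ := hWsep w₁ hw₁ w₂ hw₂ hne
    have h₁ := hxw w₁ s hs
    have h₂ := hxw w₂ s hs
    rw [hx] at h₁
    linarith [dist_triangle_left (s • w₁) (s • w₂) (s • x w₂)]
  refine ⟨W.image x, (hcov B W hWspan).trans (Finset.card_image_of_injOn hinj).ge, ?_⟩
  intro _ hx
  obtain ⟨w, -, rfl⟩ := Finset.mem_image.1 hx
  exact ⟨homoclinic_of_forall_notMem_dist_le hact hexp fun s hs => (hxz w s hs).trans hεκ,
    fun s hs => (hxz w s hs).trans hεη⟩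

lemma exists_ne_image_eq_of_covNumOn_lt (hact : ContAction Γ Y) (hexp : Expansive Γ Y)
    {T : X → Y} (hTc : Continuous T) (hTequiv : ∀ (s : Γ) (x : X), T (s • x) = s • T x)
    (z : X) : ∃ η > 0, ∀ Fs : Finset Γ, ∃ UY : Finset (Set Y), IsFiniteOpenCover UY ∧
      ∀ (B : Finset Γ) (P : Finset X), covNumOn Γ Y univ UY B < P.card →
        (∀ x ∈ P, ∀ s ∉ B ∪ Fs * B, dist (s • x) (s • z) ≤ η) →
          ∃ x₁ ∈ P, ∃ x₂ ∈ P, x₁ ≠ x₂ ∧ T x₁ = T x₂ := by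
  obtain ⟨κ, hκ, hexp⟩ := hexp
  obtain ⟨η, hη, hT⟩ := Metric.uniformContinuous_iff.1
    (CompactSpace.uniformContinuous_of_continuous hTc) (κ / 2) (half_pos hκ)
  refine ⟨η / 2, half_pos hη, fun Fs => ?_⟩
  obtain ⟨δ, hδ, hFs⟩ := exists_forall_dist_smul_lt hact Fs hκ
  obtain ⟨UY, hUY, hsmall⟩ := exists_isFiniteOpenCover_forall_dist_lt (X := Y) (lt_min hδ hκ)
  refine ⟨UY, hUY, fun B P hcard hP => ?_⟩
  obtain ⟨c, ⟨hcU, hcov⟩, hc⟩ := hUY.exists_isJoinCover_card_eq hact B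
  choose cell hcell hmem using fun y : Y => mem_iUnion₂.1 (hcov (mem_univ y))
  obtain ⟨x₁, hx₁, x₂, hx₂, hne, hsame⟩ := Finset.exists_ne_map_eq_of_card_lt_of_maps_to
    (hc ▸ hcard) (f := fun x => cell (T x)) fun x _ => hcell (T x)
  have hshadow (x : X) (hx : x ∈ P) (s : Γ) (hs : s ∉ B ∪ Fs * B) :
      dist (s • T x) (s • T z) < κ / 2 := by
    rw [← hTequiv, ← hTequiv]
    exact hT ((hP x hx s hs).trans_lt (half_lt_self hη))
  refine ⟨x₁, hx₁, x₂, hx₂, hne, eq_of_forall_dist_smul_lt hexp (min_le_right δ κ)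
    (fun a b hab => hFs a b (hab.trans_le (min_le_left δ κ))) (fun t ht => ?_)
    (hshadow x₁ hx₁) (hshadow x₂ hx₂)⟩
  have h₁ : t • T x₁ ∈ cell (T x₂) t := hsame ▸ mem_iInter₂.1 (hmem (T x₁)) t ht
  exact hsmall _ (hcU _ (hcell _) t) _ h₁ _ (mem_iInter₂.1 (hmem (T x₂)) t ht)

end Factor

end GOE

theorem factor_not_injective_on_homoclinic_class_general {Γ X Y : Type*} [Group Γ]
    [MetricSpace X] [CompactSpace X] [MulAction Γ X]
    [MetricSpace Y] [CompactSpace Y] [MulAction Γ Y]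
    (hactX : ContAction Γ X) (hactY : ContAction Γ Y)
    (F : ℕ → Finset Γ)
    (hexpX : Expansive Γ X) (hws : WeakSpec Γ X) (hexpY : Expansive Γ Y)
    (T : X → Y) (hTc : Continuous T)
    (hTequiv : ∀ (s : Γ) (x : X), T (s • x) = s • T x)
    (hent : topEntOn Γ Y Set.univ F < topEntOn Γ X Set.univ F)
    (z : X) :
    ∃ x₁ x₂ : X, Homoclinic Γ x₁ z ∧ Homoclinic Γ x₂ z ∧ x₁ ≠ x₂ ∧ T x₁ = T x₂ := by
  classical
  obtain ⟨η, hη, hY⟩ := exists_ne_image_eq_of_covNumOn_lt hactY hexpY hTc hTequiv z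
  obtain ⟨U, hU, hUX⟩ := exists_lt_limsup_of_lt_topEntOn hent
  obtain ⟨Fs, hX⟩ := exists_covNumOn_le_card_homoclinic hactX hexpX hws hU z hη
  obtain ⟨UY, hUY, hcollide⟩ := hY Fs
  obtain ⟨n, hn⟩ := exists_lt_of_limsup_lt ((limsup_le_topEntOn hUY F).trans_lt hUX)
  obtain ⟨P, hPcard, hP⟩ := hX (F n)
  obtain ⟨x₁, hx₁, x₂, hx₂, hne, hT⟩ := hcollide (F n) P (hn.trans_le hPcard) fun x hx => (hP x hx).2
  exact ⟨x₁, x₂, (hP x₁ hx₁).1, (hP x₂ hx₂).1, hne, hT⟩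

/-- a factor map onto a strictly smaller-entropy expansive system
fails to be injective on every homoclinic class. -/
theorem factor_not_injective_on_homoclinic_class {Γ X Y : Type*} [Group Γ] [Countable Γ]
    [MetricSpace X] [CompactSpace X] [MulAction Γ X]
    [MetricSpace Y] [CompactSpace Y] [MulAction Γ Y]
    (hactX : ContAction Γ X) (hactY : ContAction Γ Y)
    (F : ℕ → Finset Γ) (hF : IsFolner Γ F)
    (hexpX : Expansive Γ X) (hws : WeakSpec Γ X) (hexpY : Expansive Γ Y)
    (T : X → Y) (hTc : Continuous T) (hTsurj : Function.Surjective T)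
    (hTequiv : ∀ (s : Γ) (x : X), T (s • x) = s • T x)
    (hent : topEntOn Γ Y Set.univ F < topEntOn Γ X Set.univ F)
    (z : X) :
    ∃ x₁ x₂ : X, Homoclinic Γ x₁ z ∧ Homoclinic Γ x₂ z ∧ x₁ ≠ x₂ ∧ T x₁ = T x₂ :=
  factor_not_injective_on_homoclinic_class_general hactX hactY F hexpX hws hexpY T hTc hTequiv hent
    z
end
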